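/- arXiv:1204.5199 — 6 statements merged into one kernel-verified Lean document; each statement's English description precedes it below -/
import Mathlib

section
/- Let S be a set containing a distinguished element O, let Ω ⊆ S_nc respect direct sums of matrices, suppose supp Ω is nonempty, and suppose that for every n ∈ supp Ω the set Ω_n is a singleton {X_n}. Let d = gcd{n : n ∈ supp Ω}. Then there exists a matrix X ∈ S^{d×d} such that X_n = ⊕_{α=1}^{n/d} X for every n ∈ supp Ω. -/
/-!
Since every `Ω n` is the singleton `{X n}` and `Ω` respects direct sums, `X (n + m)` is
`X n ⊕ X m` for `n, m` in the support. So all the `X n` are top-left corners of one infinite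
matrix `F`, and `F` splits as (its `n × n` corner) `⊕ F` at every `n` in the support. The sizes at
which `F` splits are closed under addition and truncated subtraction, hence are the multiples of
some `g`; as `g` divides the whole support, `g ∣ d`, so `F` splits at `d`: it is block diagonal
with every diagonal block equal to its `d × d` corner.
-/

namespace NCPaper

variable {S : Type*}

/-- Direct sum of two square matrices over `S`, with off-diagonal entries `O`. -/
def dSum (O : S) {n m : ℕ} (X : Matrix (Fin n) (Fin n) S) (Y : Matrix (Fin m) (Fin m) S) :
    Matrix (Fin (n + m)) (Fin (n + m)) S := fun i j =>
  if hi : (i : ℕ) < n then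
    if hj : (j : ℕ) < n then X ⟨i, hi⟩ ⟨j, hj⟩ else O
  else if hj : (j : ℕ) < n then O
  else Y ⟨(i : ℕ) - n, by have := i.isLt; omega⟩ ⟨(j : ℕ) - n, by have := j.isLt; omega⟩

/-- Direct sum of `k` copies of a `d × d` matrix, as a `(k*d) × (k*d)` matrix. -/
def repSum (O : S) {d : ℕ} (k : ℕ) (X : Matrix (Fin d) (Fin d) S) :
    Matrix (Fin (k * d)) (Fin (k * d)) S := fun i j =>
  if (i : ℕ) / d = (j : ℕ) / d then
    X ⟨(i : ℕ) % d, Nat.mod_lt _ (Nat.pos_of_ne_zero fun h => absurd i.isLt (by simp [h]))⟩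
      ⟨(j : ℕ) % d, Nat.mod_lt _ (Nat.pos_of_ne_zero fun h => absurd j.isLt (by simp [h]))⟩
  else O

/-- Cast a square matrix along an equality of sizes. -/
def castMat {n m : ℕ} (h : n = m) (X : Matrix (Fin n) (Fin n) S) :
    Matrix (Fin m) (Fin m) S := fun i j => X (Fin.cast h.symm i) (Fin.cast h.symm j)

/-- The support of a subset of the nc space: sizes where it is nonempty. -/
def supp (Ω : ∀ n : ℕ, Set (Matrix (Fin n) (Fin n) S)) : Set ℕ :=
  {n | 0 < n ∧ (Ω n).Nonempty}

/-- A subset of the nc space respects direct sums of matrices. -/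
def RespectsDSums (O : S) (Ω : ∀ n : ℕ, Set (Matrix (Fin n) (Fin n) S)) : Prop :=
  ∀ ⦃n m : ℕ⦄ (X : Matrix (Fin n) (Fin n) S) (Y : Matrix (Fin m) (Fin m) S),
    X ∈ Ω n → Y ∈ Ω m → dSum O X Y ∈ Ω (n + m)

def entry (O : S) {n : ℕ} (A : Matrix (Fin n) (Fin n) S) (i j : ℕ) : S :=
  if h : i < n ∧ j < n then A ⟨i, h.1⟩ ⟨j, h.2⟩ else O

section entry

variable {O : S} {n m : ℕ} (A : Matrix (Fin n) (Fin n) S) (B : Matrix (Fin m) (Fin m) S)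
  {i j : ℕ}

theorem entry_fin (i j : Fin n) : entry O A i j = A i j := by
  simp [entry]

theorem entry_dSum_of_lt (hi : i < n) (hj : j < n) :
    entry O (dSum O A B) i j = entry O A i j := by
  simp [entry, dSum, hi, hj, show i < n + m by omega, show j < n + m by omega]

theorem entry_dSum_add_add : entry O (dSum O A B) (i + n) (j + n) = entry O B i j := by
  simp [entry, dSum, Nat.add_comm n m]

theorem entry_dSum_add_right (hi : i < n) : entry O (dSum O A B) i (j + n) = O := by
  simp [entry, dSum, hi]

theorem entry_dSum_add_left (hj : j < n) : entry O (dSum O A B) (i + n) j = O := by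
  simp [entry, dSum, hj]

end entry

theorem Nat.exists_forall_mem_iff_dvd_of_tsub_mem (M : AddSubmonoid ℕ)
    (hsub : ∀ p ∈ M, ∀ q ∈ M, q - p ∈ M) : ∃ g, ∀ n, n ∈ M ↔ g ∣ n := by
  by_cases hpos : ∃ g, 0 < g ∧ g ∈ M
  · classical
    have hg := (Nat.find_spec hpos).2
    refine ⟨Nat.find hpos, fun n => ⟨fun hn => ?_, fun ⟨c, hc⟩ => ?_⟩⟩
    · have hmod : n % Nat.find hpos ∈ M := by
        rw [Nat.mod_eq_sub_mul_div, Nat.mul_comm, ← smul_eq_mul]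
        exact hsub _ (M.nsmul_mem hg _) _ hn
      by_contra hndvd
      have hlt := Nat.mod_lt n (Nat.find_spec hpos).1
      exact Nat.find_min hpos hlt ⟨Nat.pos_of_ne_zero (mt Nat.dvd_of_mod_eq_zero hndvd), hmod⟩
    · rw [hc, Nat.mul_comm, ← smul_eq_mul]
      exact M.nsmul_mem hg c
  · push Not at hpos
    refine ⟨0, fun n => ⟨fun hn => ?_, fun h => ?_⟩⟩
    · rw [Nat.zero_dvd]
      by_contra hn0
      exact hpos n (Nat.pos_of_ne_zero hn0) hn
    · rw [Nat.zero_dvd.mp h]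
      exact M.zero_mem

/-- `F` is the direct sum of its top-left `p × p` corner and of `F` itself. -/
def SplitsAt (O : S) (F : ℕ → ℕ → S) (p : ℕ) : Prop :=
  ∀ i j, F (i + p) (j + p) = F i j ∧ (i < p → F i (j + p) = O ∧ F (j + p) i = O)

namespace SplitsAt

variable {O : S} {F : ℕ → ℕ → S} {p q : ℕ}

theorem zero : SplitsAt O F 0 := fun _ _ => ⟨rfl, fun h => absurd h (Nat.not_lt_zero _)⟩

theorem add (hp : SplitsAt O F p) (hq : SplitsAt O F q) : SplitsAt O F (p + q) := by
  intro i j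
  refine ⟨by rw [← Nat.add_assoc, ← Nat.add_assoc, (hq _ _).1, (hp _ _).1], fun hi => ?_⟩
  rw [Nat.add_comm p q, ← Nat.add_assoc]
  rcases lt_or_ge i p with hip | hpi
  · exact (hp i (j + q)).2 hip
  · obtain ⟨i, rfl⟩ := Nat.exists_eq_add_of_le' hpi
    rw [(hp _ _).1, (hp _ _).1]
    exact (hq i j).2 (by omega)

theorem tsub (hp : SplitsAt O F p) (hq : SplitsAt O F q) : SplitsAt O F (q - p) := by
  rcases lt_or_ge q p with hqp | hpq
  · rw [Nat.sub_eq_zero_of_le hqp.le]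
    exact zero
  obtain ⟨r, rfl⟩ := Nat.exists_eq_add_of_le' hpq
  rw [Nat.add_sub_cancel]
  intro i j
  refine ⟨?_, fun hi => ?_⟩
  · rw [← (hp _ _).1, Nat.add_assoc, Nat.add_assoc, (hq _ _).1]
  · rw [← (hp _ _).1, ← (hp (j + r) i).1, Nat.add_assoc]
    exact (hq (i + p) j).2 (by omega)

theorem eq_ite {d : ℕ} (hd : 0 < d) (h : SplitsAt O F d) (i j : ℕ) :
    F i j = if i / d = j / d then F (i % d) (j % d) else O := by
  induction i using Nat.strong_induction_on generalizing j with
  | _ i ih =>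
  rcases lt_or_ge i d with hi | hi <;> rcases lt_or_ge j d with hj | hj
  · simp [Nat.div_eq_of_lt hi, Nat.div_eq_of_lt hj, Nat.mod_eq_of_lt hi, Nat.mod_eq_of_lt hj]
  · obtain ⟨j, rfl⟩ := Nat.exists_eq_add_of_le' hj
    simp [(h i j).2 hi, Nat.div_eq_of_lt hi, Nat.add_div_right _ hd]
  · obtain ⟨i, rfl⟩ := Nat.exists_eq_add_of_le' hi
    simp [(h j i).2 hj, Nat.div_eq_of_lt hj, Nat.add_div_right _ hd]
  · obtain ⟨i, rfl⟩ := Nat.exists_eq_add_of_le' hi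
    obtain ⟨j, rfl⟩ := Nat.exists_eq_add_of_le' hj
    simp [(h i j).1, ih i (by omega), Nat.add_div_right _ hd]

end SplitsAt

def splitPoints (O : S) (F : ℕ → ℕ → S) : AddSubmonoid ℕ where
  carrier := {p | SplitsAt O F p}
  zero_mem' := SplitsAt.zero
  add_mem' := SplitsAt.add

section stableEntry

variable {O : S} {T : Set ℕ} {X : ∀ n : ℕ, Matrix (Fin n) (Fin n) S} {n m i j : ℕ}

/-- The infinite matrix of which every `X n`, `n ∈ T`, is the top-left corner. -/
noncomputable def stableEntry (O : S) (T : Set ℕ) (X : ∀ n : ℕ, Matrix (Fin n) (Fin n) S)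
    (i j : ℕ) : S :=
  entry O (X (Classical.epsilon fun n => n ∈ T ∧ i < n ∧ j < n)) i j

theorem entry_eq_entry_of_mem (hX : ∀ n ∈ T, ∀ m ∈ T, X (n + m) = dSum O (X n) (X m))
    (hn : n ∈ T) (hm : m ∈ T) (hin : i < n) (hjn : j < n) (him : i < m) (hjm : j < m) :
    entry O (X n) i j = entry O (X m) i j :=
  calc entry O (X n) i j = entry O (X (n + m)) i j := by
        rw [hX n hn m hm, entry_dSum_of_lt _ _ hin hjn]
    _ = entry O (X (m + n)) i j := by rw [Nat.add_comm]
    _ = entry O (X m) i j := by rw [hX m hm n hn, entry_dSum_of_lt _ _ him hjm]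

theorem stableEntry_eq (hX : ∀ n ∈ T, ∀ m ∈ T, X (n + m) = dSum O (X n) (X m))
    (hn : n ∈ T) (hi : i < n) (hj : j < n) : stableEntry O T X i j = entry O (X n) i j := by
  have hε := Classical.epsilon_spec (p := fun n => n ∈ T ∧ i < n ∧ j < n) ⟨n, hn, hi, hj⟩
  exact entry_eq_entry_of_mem hX hε.1 hn hε.2.1 hε.2.2 hi hj

theorem exists_mem_gt_of_add_mem (hT : ∀ n ∈ T, ∀ m ∈ T, n + m ∈ T) (hn : n ∈ T) (hn0 : 0 < n)
    (k : ℕ) : ∃ m ∈ T, k < m := by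
  induction k with
  | zero => exact ⟨n, hn, hn0⟩
  | succ k ih =>
    obtain ⟨m, hm, hkm⟩ := ih
    exact ⟨m + n, hT m hm n hn, by omega⟩

theorem splitsAt_stableEntry (hT : ∀ n ∈ T, ∀ m ∈ T, n + m ∈ T)
    (hX : ∀ n ∈ T, ∀ m ∈ T, X (n + m) = dSum O (X n) (X m)) (hn : n ∈ T) :
    SplitsAt O (stableEntry O T X) n := by
  obtain rfl | hn0 := n.eq_zero_or_pos
  · exact SplitsAt.zero
  intro i j
  obtain ⟨m, hm, hijm⟩ := exists_mem_gt_of_add_mem hT hn hn0 (i + j)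
  have hsum : ∀ a b, a < n + m → b < n + m →
      stableEntry O T X a b = entry O (dSum O (X n) (X m)) a b := fun a b ha hb => by
    rw [stableEntry_eq hX (hT n hn m hm) ha hb, hX n hn m hm]
  refine ⟨?_, fun hi => ⟨?_, ?_⟩⟩
  · rw [hsum _ _ (by omega) (by omega), entry_dSum_add_add,
      stableEntry_eq hX hm (by omega) (by omega)]
  · rw [hsum _ _ (by omega) (by omega), entry_dSum_add_right _ _ hi]
  · rw [hsum _ _ (by omega) (by omega), entry_dSum_add_left _ _ hi]

end stableEntry

section supp

variable {O : S} {Ω : ∀ n : ℕ, Set (Matrix (Fin n) (Fin n) S)} {n m : ℕ}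

theorem add_mem_supp (hdir : RespectsDSums O Ω) (hn : n ∈ supp Ω) (hm : m ∈ supp Ω) :
    n + m ∈ supp Ω :=
  ⟨Nat.add_pos_left hn.1 m, _, hdir _ _ hn.2.some_mem hm.2.some_mem⟩

theorem eq_dSum_of_eq_singleton (hdir : RespectsDSums O Ω)
    {X : ∀ n : ℕ, Matrix (Fin n) (Fin n) S} (hsingle : ∀ n ∈ supp Ω, Ω n = {X n})
    (hn : n ∈ supp Ω) (hm : m ∈ supp Ω) :
    X (n + m) = dSum O (X n) (X m) := by
  have hmem := hdir (X n) (X m) (by rw [hsingle n hn]; rfl) (by rw [hsingle m hm]; rfl)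
  rw [hsingle _ (add_mem_supp hdir hn hm)] at hmem
  exact hmem.symm

end supp

theorem nc_singleton_lemma_general {S : Type*} (O : S)
    (Ω : ∀ n : ℕ, Set (Matrix (Fin n) (Fin n) S))
    (hdir : RespectsDSums O Ω)
    (X : ∀ n : ℕ, Matrix (Fin n) (Fin n) S)
    (hsingle : ∀ n ∈ supp Ω, Ω n = {X n})
    (d : ℕ) (hdvd : ∀ n ∈ supp Ω, d ∣ n)
    (hgcd : ∀ e : ℕ, (∀ n ∈ supp Ω, e ∣ n) → e ∣ d) :
    ∃ Xs : Matrix (Fin d) (Fin d) S, ∀ n, ∀ hn : n ∈ supp Ω,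
      X n = castMat (Nat.div_mul_cancel (hdvd n hn)) (repSum O (n / d) Xs) := by
  have hT : ∀ n ∈ supp Ω, ∀ m ∈ supp Ω, n + m ∈ supp Ω :=
    fun _ hn _ hm => add_mem_supp hdir hn hm
  have hX : ∀ n ∈ supp Ω, ∀ m ∈ supp Ω, X (n + m) = dSum O (X n) (X m) :=
    fun _ hn _ hm => eq_dSum_of_eq_singleton hdir hsingle hn hm
  have hd : SplitsAt O (stableEntry O (supp Ω) X) d := by
    obtain ⟨g, hg⟩ := Nat.exists_forall_mem_iff_dvd_of_tsub_mem (splitPoints O _)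
      fun _ hp _ hq => hp.tsub hq
    exact (hg d).2 (hgcd g fun n hn => (hg n).1 (splitsAt_stableEntry hT hX hn))
  refine ⟨Matrix.of fun a b => stableEntry O (supp Ω) X a b, fun n hn => ?_⟩
  ext i j
  rw [← entry_fin (O := O) (X n), ← stableEntry_eq hX hn i.2 j.2,
    hd.eq_ite (Nat.pos_of_dvd_of_pos (hdvd n hn) hn.1)]
  simp [castMat, repSum]

/-- **Noncommutative singleton lemma.** If a subset of the nc space respects direct sums and
each nonempty level is a singleton `{X n}`, then there is a single `d × d` matrix `Xs`
(with `d` the gcd of the support) such that `X n` is the direct sum of `n / d` copies of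
`Xs` for all `n` in the support. -/
theorem nc_singleton_lemma {S : Type*} (O : S)
    (Ω : ∀ n : ℕ, Set (Matrix (Fin n) (Fin n) S)) (hΩ0 : Ω 0 = ∅)
    (hdir : RespectsDSums O Ω) (hne : (supp Ω).Nonempty)
    (X : ∀ n : ℕ, Matrix (Fin n) (Fin n) S)
    (hsingle : ∀ n ∈ supp Ω, Ω n = {X n})
    (d : ℕ) (hdvd : ∀ n ∈ supp Ω, d ∣ n)
    (hgcd : ∀ e : ℕ, (∀ n ∈ supp Ω, e ∣ n) → e ∣ d) :
    ∃ Xs : Matrix (Fin d) (Fin d) S, ∀ n, ∀ hn : n ∈ supp Ω,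
      X n = castMat (Nat.div_mul_cancel (hdvd n hn)) (repSum O (n / d) Xs) :=
  nc_singleton_lemma_general O Ω hdir X hsingle d hdvd hgcd

end NCPaper
end

section
/- Let S be a set containing a distinguished element O, let Ω ⊆ S_nc respect direct sums of matrices with supp Ω nonempty, and let f : Ω → Ω satisfy: (i) f(Ω_n) ⊆ Ω_n for every n ∈ supp Ω; (ii) f respects direct sums, i.e., f(X ⊕ Y) = f(X) ⊕ f(Y) for all X, Y ∈ Ω; (iii) for every n ∈ supp Ω the mapping f restricted to Ω_n has a unique fixed point X_{*n}. Let d = gcd{n : n ∈ supp Ω}. Then there exists X_* ∈ S^{d×d} such that X_{*n} = ⊕_{α=1}^{n/d} X_* for every n ∈ supp Ω. -/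
/-
Uniqueness of the fixed points forces `X_{*(n+m)} = X_{*n} ⊕ X_{*m}` for `n, m ∈ supp Ω`, so
all fixed points are truncations of a single `ℕ × ℕ` matrix `E` (matrices are compared through
`padded`, which extends them by `O`). This `E` is invariant under the diagonal shift by every
`n ∈ supp Ω` and vanishes at the entries separated by the diagonal cut at such an `n`. The
support is an additive semigroup with gcd `d`, hence contains all large multiples of `d`; so `E`
is invariant under the shift by `d` and vanishes off the diagonal `d × d` blocks, i.e. it is the
direct sum of copies of its top-left `d × d` block.
-/

namespace NCPaper

variable {S : Type*}

lemma exists_forall_ge_mul_setGcd_mem {T : Set ℕ} (hadd : ∀ n ∈ T, ∀ m ∈ T, n + m ∈ T)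
    (hd : Nat.setGcd T ≠ 0) : ∃ K, ∀ k ≥ K, k * Nat.setGcd T ∈ T := by
  let M : AddSubmonoid ℕ :=
    { carrier := insert 0 T
      zero_mem' := Set.mem_insert 0 T
      add_mem' := by
        rintro a b (rfl | ha) (rfl | hb)
        exacts [Or.inl rfl, (zero_add b).symm ▸ Or.inr hb, (add_zero a).symm ▸ Or.inr ha,
          Or.inr (hadd a ha b hb)] }
  have hle : AddSubmonoid.closure T ≤ M := AddSubmonoid.closure_le.mpr (Set.subset_insert 0 T)
  obtain ⟨N, hN⟩ := Nat.exists_mem_closure_of_ge T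
  refine ⟨N + 1, fun k hk => ?_⟩
  have hmem : k * Nat.setGcd T ∈ M :=
    hle (hN _ ((Nat.le_succ N).trans (hk.trans (Nat.le_mul_of_pos_right k (Nat.pos_of_ne_zero hd))))
      (dvd_mul_left _ _))
  exact hmem.resolve_left (mul_ne_zero (by omega) hd)

def padded (O : S) {n : ℕ} (X : Matrix (Fin n) (Fin n) S) (i j : ℕ) : S :=
  if h : i < n ∧ j < n then X ⟨i, h.1⟩ ⟨j, h.2⟩ else O

section padded

variable {O : S} {n m : ℕ}

lemma padded_injective :
    Function.Injective (padded O : Matrix (Fin n) (Fin n) S → ℕ → ℕ → S) := by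
  intro X Y h
  ext i j
  simpa [padded] using congrFun (congrFun h i) j

lemma padded_castMat (h : n = m) (X : Matrix (Fin n) (Fin n) S) :
    padded O (castMat h X) = padded O X := by
  subst h
  rfl

lemma padded_repSum {d : ℕ} (k : ℕ) (X : Matrix (Fin d) (Fin d) S) {i j : ℕ}
    (hi : i < k * d) (hj : j < k * d) :
    padded O (repSum O k X) i j = if i / d = j / d then padded O X (i % d) (j % d) else O := by
  have hd : 0 < d := Nat.pos_of_ne_zero fun h => by simp [h] at hi
  simp [padded, repSum, hi, hj, Nat.mod_lt _ hd]

variable (X : Matrix (Fin n) (Fin n) S) (Y : Matrix (Fin m) (Fin m) S) {i j : ℕ}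

lemma padded_dSum_of_lt (hi : i < n) (hj : j < n) :
    padded O (dSum O X Y) i j = padded O X i j := by
  simp [padded, dSum, hi, hj, Nat.lt_add_right m hi, Nat.lt_add_right m hj]

lemma padded_dSum_add : padded O (dSum O X Y) (i + n) (j + n) = padded O Y i j := by
  simp [padded, dSum, Nat.add_comm n m]

lemma padded_dSum_eq_O_of_lt_of_le (hi : i < n) (hj : n ≤ j) :
    padded O (dSum O X Y) i j = O ∧ padded O (dSum O X Y) j i = O := by
  simp [padded, dSum, hi, Nat.not_lt.mpr hj]

end padded

section additiveFamily

variable {O : S} {T : Set ℕ} {F : ∀ n : ℕ, Matrix (Fin n) (Fin n) S}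
  (hF : ∀ n ∈ T, ∀ m ∈ T, F (n + m) = dSum O (F n) (F m))
include hF

lemma padded_eq_of_lt {n m i j : ℕ} (hn : n ∈ T) (hm : m ∈ T) (hin : i < n) (hjn : j < n)
    (him : i < m) (hjm : j < m) : padded O (F n) i j = padded O (F m) i j := by
  have hnm : padded O (F (n + m)) i j = padded O (F n) i j := by
    rw [hF n hn m hm, padded_dSum_of_lt _ _ hin hjn]
  have hmn : padded O (F (m + n)) i j = padded O (F m) i j := by
    rw [hF m hm n hn, padded_dSum_of_lt _ _ him hjm]
  rw [← hnm, ← hmn, Nat.add_comm]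

lemma padded_add_shift {n m : ℕ} (hn : n ∈ T) (hm : m ∈ T) (i j : ℕ) :
    padded O (F (n + m)) (i + n) (j + n) = padded O (F m) i j := by
  rw [hF n hn m hm, padded_dSum_add]

variable (hadd : ∀ n ∈ T, ∀ m ∈ T, n + m ∈ T) {d K : ℕ} (hK : ∀ k ≥ K, k * d ∈ T)
include hadd hK

lemma padded_add_mul {n i j : ℕ} (hn : n ∈ T) (q : ℕ) (hi : i + q * d < n)
    (hj : j + q * d < n) :
    padded O (F n) (i + q * d) (j + q * d) = padded O (F n) i j := by
  have hb : K * d ∈ T := hK K le_rfl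
  have ha : (K + q) * d ∈ T := hK _ (Nat.le_add_right K q)
  have hsum : i + q * d + K * d = i + (K + q) * d ∧ j + q * d + K * d = j + (K + q) * d := by
    constructor <;> ring
  calc padded O (F n) (i + q * d) (j + q * d)
      = padded O (F (K * d + n)) (i + q * d + K * d) (j + q * d + K * d) :=
        (padded_add_shift hF hb hn _ _).symm
    _ = padded O (F ((K + q) * d + n)) (i + (K + q) * d) (j + (K + q) * d) := by
        rw [hsum.1, hsum.2]
        exact padded_eq_of_lt hF (hadd _ hb _ hn) (hadd _ ha _ hn) (by omega) (by omega)
          (by omega) (by omega)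
    _ = padded O (F n) i j := padded_add_shift hF ha hn _ _

lemma padded_eq_O_of_div_lt (hd : 0 < d) {n i j : ℕ} (hn : n ∈ T) (hj : j < n)
    (hij : i / d < j / d) : padded O (F n) i j = O ∧ padded O (F n) j i = O := by
  have hb : K * d ∈ T := hK K le_rfl
  have hc : (K + i / d + 1) * d ∈ T := hK _ (Nat.le_add_right_of_le (Nat.le_add_right _ _))
  have hi : i < n := (Nat.lt_of_div_lt_div hij).trans hj
  have hlo : i + K * d < (K + i / d + 1) * d := by
    have := Nat.lt_div_mul_add (a := i) hd
    linarith
  have hhi : (K + i / d + 1) * d ≤ j + K * d := by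
    have := Nat.mul_le_mul_right d (Nat.succ_le_of_lt hij)
    have := Nat.div_mul_le_self j d
    linarith
  have hcross := padded_dSum_eq_O_of_lt_of_le (O := O) (F _) (F n) hlo hhi
  rw [← hF _ hc n hn] at hcross
  have hlevel {x y : ℕ} (hx : x < n) (hy : y < n) :
      padded O (F n) x y = padded O (F ((K + i / d + 1) * d + n)) (x + K * d) (y + K * d) := by
    rw [← padded_add_shift hF hb hn]
    exact padded_eq_of_lt hF (hadd _ hb _ hn) (hadd _ hc _ hn) (by omega) (by omega)
      (by linarith) (by linarith)
  exact ⟨(hlevel hi hj).trans hcross.1, (hlevel hj hi).trans hcross.2⟩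

lemma exists_eq_castMat_repSum (hd : 0 < d) :
    ∃ Xs : Matrix (Fin d) (Fin d) S, ∀ n ∈ T, ∀ hdn : d ∣ n,
      F n = castMat (Nat.div_mul_cancel hdn) (repSum O (n / d) Xs) := by
  have hL : (K + 1) * d ∈ T := hK _ (Nat.le_succ K)
  refine ⟨Matrix.of fun a b => padded O (F ((K + 1) * d)) a b, fun n hn hdn =>
    padded_injective (O := O) ?_⟩
  funext i j
  rw [padded_castMat]
  have hnd : n / d * d = n := Nat.div_mul_cancel hdn
  by_cases hij : i < n ∧ j < n
  · rw [padded_repSum _ _ (hnd.symm ▸ hij.1) (hnd.symm ▸ hij.2)]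
    split_ifs with hq
    · have hi := Nat.mod_lt i hd
      have hj := Nat.mod_lt j hd
      have hdL : d ≤ (K + 1) * d := Nat.le_mul_of_pos_left d (Nat.succ_pos K)
      have hshift := padded_add_mul hF hadd hK hn (i := i % d) (j := j % d) (i / d)
      rw [Nat.mod_add_div', hq, Nat.mod_add_div'] at hshift
      rw [hshift hij.1 hij.2, padded_eq_of_lt hF hn hL ((Nat.mod_le i d).trans_lt hij.1)
        ((Nat.mod_le j d).trans_lt hij.2) (hi.trans_le hdL) (hj.trans_le hdL)]
      simp [padded, hi, hj]
    · rcases Nat.lt_or_gt_of_ne hq with hlt | hgt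
      · exact (padded_eq_O_of_div_lt hF hadd hK hd hn hij.2 hlt).1
      · exact (padded_eq_O_of_div_lt hF hadd hK hd hn hij.1 hgt).2
  · simp [padded, hnd, hij]

end additiveFamily

section fixedPoints

variable {O : S} {Ω : ∀ n : ℕ, Set (Matrix (Fin n) (Fin n) S)} (hdir : RespectsDSums O Ω)
include hdir

lemma supp_add_mem {n m : ℕ} (hn : n ∈ supp Ω) (hm : m ∈ supp Ω) : n + m ∈ supp Ω := by
  obtain ⟨X, hX⟩ := hn.2
  obtain ⟨Y, hY⟩ := hm.2
  exact ⟨Nat.add_pos_left hn.1 m, dSum O X Y, hdir X Y hX hY⟩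

lemma unique_fixedPoint_add {f : ∀ n : ℕ, Matrix (Fin n) (Fin n) S → Matrix (Fin n) (Fin n) S}
    (hsums : ∀ ⦃n m : ℕ⦄ (X : Matrix (Fin n) (Fin n) S) (Y : Matrix (Fin m) (Fin m) S),
      X ∈ Ω n → Y ∈ Ω m → f (n + m) (dSum O X Y) = dSum O (f n X) (f m Y))
    {Xst : ∀ n : ℕ, Matrix (Fin n) (Fin n) S}
    (hfix : ∀ n ∈ supp Ω, Xst n ∈ Ω n ∧ f n (Xst n) = Xst n ∧
      ∀ Y ∈ Ω n, f n Y = Y → Y = Xst n)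
    {n m : ℕ} (hn : n ∈ supp Ω) (hm : m ∈ supp Ω) :
    Xst (n + m) = dSum O (Xst n) (Xst m) := by
  obtain ⟨hXn, hfXn, -⟩ := hfix n hn
  obtain ⟨hXm, hfXm, -⟩ := hfix m hm
  refine ((hfix _ (supp_add_mem hdir hn hm)).2.2 _ (hdir _ _ hXn hXm) ?_).symm
  rw [hsums _ _ hXn hXm, hfXn, hfXm]

end fixedPoints

theorem fixed_point_theorem_part1_general {S : Type*} (O : S)
    (Ω : ∀ n : ℕ, Set (Matrix (Fin n) (Fin n) S))
    (hdir : RespectsDSums O Ω) (hne : (supp Ω).Nonempty)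
    (f : ∀ n : ℕ, Matrix (Fin n) (Fin n) S → Matrix (Fin n) (Fin n) S)
    (hsums : ∀ ⦃n m : ℕ⦄ (X : Matrix (Fin n) (Fin n) S) (Y : Matrix (Fin m) (Fin m) S),
      X ∈ Ω n → Y ∈ Ω m → f (n + m) (dSum O X Y) = dSum O (f n X) (f m Y))
    (Xst : ∀ n : ℕ, Matrix (Fin n) (Fin n) S)
    (hfix : ∀ n ∈ supp Ω, Xst n ∈ Ω n ∧ f n (Xst n) = Xst n ∧
      ∀ Y ∈ Ω n, f n Y = Y → Y = Xst n)
    (d : ℕ) (hdvd : ∀ n ∈ supp Ω, d ∣ n)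
    (hgcd : ∀ e : ℕ, (∀ n ∈ supp Ω, e ∣ n) → e ∣ d) :
    ∃ Xs : Matrix (Fin d) (Fin d) S, ∀ n, ∀ hn : n ∈ supp Ω,
      Xst n = castMat (Nat.div_mul_cancel (hdvd n hn)) (repSum O (n / d) Xs) := by
  have hadd : ∀ n ∈ supp Ω, ∀ m ∈ supp Ω, n + m ∈ supp Ω :=
    fun n hn m hm => supp_add_mem hdir hn hm
  have hsetGcd : Nat.setGcd (supp Ω) = d :=
    Nat.dvd_antisymm (hgcd _ fun n hn => Nat.setGcd_dvd_of_mem hn) (Nat.dvd_setGcd_iff.mpr hdvd)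
  obtain ⟨n₀, hn₀⟩ := hne
  have hd : 0 < d := Nat.pos_of_dvd_of_pos (hdvd n₀ hn₀) hn₀.1
  obtain ⟨K, hK⟩ := exists_forall_ge_mul_setGcd_mem hadd (hsetGcd ▸ hd.ne')
  rw [hsetGcd] at hK
  obtain ⟨Xs, hXs⟩ := exists_eq_castMat_repSum
    (fun n hn m hm => unique_fixedPoint_add hdir hsums hfix hn hm) hadd hK hd
  exact ⟨Xs, fun n hn => hXs n hn (hdvd n hn)⟩

/-- **Theorem A, part 1.** A size- and direct-sum-respecting self-mapping of a direct-sum-closed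
subset of the nc space having a unique fixed point `Xst n` at every level `n` of the support
has all its fixed points of the form `⊕_{α=1}^{n/d} Xs` for a single `d × d` matrix `Xs`,
where `d` is the gcd of the support. -/
theorem fixed_point_theorem_part1 {S : Type*} (O : S)
    (Ω : ∀ n : ℕ, Set (Matrix (Fin n) (Fin n) S)) (hΩ0 : Ω 0 = ∅)
    (hdir : RespectsDSums O Ω) (hne : (supp Ω).Nonempty)
    (f : ∀ n : ℕ, Matrix (Fin n) (Fin n) S → Matrix (Fin n) (Fin n) S)
    (hmaps : ∀ n ∈ supp Ω, ∀ X ∈ Ω n, f n X ∈ Ω n)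
    (hsums : ∀ ⦃n m : ℕ⦄ (X : Matrix (Fin n) (Fin n) S) (Y : Matrix (Fin m) (Fin m) S),
      X ∈ Ω n → Y ∈ Ω m → f (n + m) (dSum O X Y) = dSum O (f n X) (f m Y))
    (Xst : ∀ n : ℕ, Matrix (Fin n) (Fin n) S)
    (hfix : ∀ n ∈ supp Ω, Xst n ∈ Ω n ∧ f n (Xst n) = Xst n ∧
      ∀ Y ∈ Ω n, f n Y = Y → Y = Xst n)
    (d : ℕ) (hdvd : ∀ n ∈ supp Ω, d ∣ n)
    (hgcd : ∀ e : ℕ, (∀ n ∈ supp Ω, e ∣ n) → e ∣ d) :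
    ∃ Xs : Matrix (Fin d) (Fin d) S, ∀ n, ∀ hn : n ∈ supp Ω,
      Xst n = castMat (Nat.div_mul_cancel (hdvd n hn)) (repSum O (n / d) Xs) :=
  fixed_point_theorem_part1_general O Ω hdir hne f hsums Xst hfix d hdvd hgcd

end NCPaper
end

section
/- Let R be a unital ring, M a bimodule over R, O = 0 ∈ M, let Ω ⊆ M_nc respect direct sums of matrices with supp Ω nonempty, and let f : Ω → Ω be a nc function (f respects matrix sizes, direct sums, and intertwinings) such that for every n ∈ supp Ω the mapping f restricted to Ω_n has a unique fixed point X_{*n}. Let d = gcd{n : n ∈ supp Ω}, and let X_* ∈ M^{d×d} be the matrix with X_{*n} = ⊕_{α=1}^{n/d} X_* for every n ∈ supp Ω. Then there exist a set Ω̃ ⊆ M_nc respecting direct sums with Ω̃ ⊇ Ω and supp Ω̃ = {kd : k ∈ ℕ, k ≥ 1}, and a nc function f̃ : Ω̃ → Ω̃ (respecting matrix sizes, direct sums, and intertwinings) such that f̃ restricted to Ω equals f, and for every n ∈ supp Ω̃ the mapping f̃ restricted to Ω̃_n has a unique fixed point, namely ⊕_{α=1}^{n/d} X_*. -/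
namespace NCPaper

variable {S : Type*}

/-- Left action of a matrix over the ring `R` on a matrix over the bimodule `M`. -/
def lAct (R : Type*) {M : Type*} [Ring R] [AddCommGroup M] [Module R M]
    {n m p : ℕ} (T : Matrix (Fin n) (Fin m) R) (Y : Matrix (Fin m) (Fin p) M) :
    Matrix (Fin n) (Fin p) M := fun i j => ∑ k, T i k • Y k j

/-- Right action of a matrix over the ring `R` on a matrix over the bimodule `M`
(the right `R`-module structure on `M` is given by a module structure over `Rᵐᵒᵖ`). -/
def rAct (R : Type*) {M : Type*} [Ring R] [AddCommGroup M] [Module Rᵐᵒᵖ M]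
    {n m p : ℕ} (X : Matrix (Fin n) (Fin m) M) (T : Matrix (Fin m) (Fin p) R) :
    Matrix (Fin n) (Fin p) M := fun i j => ∑ k, MulOpposite.op (T k j) • X i k

/-- A size- and direct-sum-respecting mapping respects intertwinings (so is a nc function):
`XT = TY` implies `f(X)T = Tf(Y)`. -/
def RespectsIntertwinings (R : Type*) {M : Type*} [Ring R] [AddCommGroup M]
    [Module R M] [Module Rᵐᵒᵖ M]
    (Ω : ∀ n : ℕ, Set (Matrix (Fin n) (Fin n) M))
    (f : ∀ n : ℕ, Matrix (Fin n) (Fin n) M → Matrix (Fin n) (Fin n) M) : Prop :=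
  ∀ ⦃n m : ℕ⦄ (X : Matrix (Fin n) (Fin n) M) (Y : Matrix (Fin m) (Fin m) M)
    (T : Matrix (Fin n) (Fin m) R), X ∈ Ω n → Y ∈ Ω m →
    rAct R X T = lAct R T Y → rAct R (f n X) T = lAct R T (f m Y)


/-!
Let `Ω̃` consist of the ordered direct sums of elements of `Ω` and copies of `Xs`, and let `f̃`
apply `f` to the `Ω`-blocks and fix the copies of `Xs`. Some `⊕^{n₀/d} Xs = Xs ⊕ Xr` is a fixed
point of `f` in `Ω n₀`, so padding an intertwiner with zeros shows that `Xs ↦ Xs` and `f` respect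
intertwinings jointly; this passes to direct sums block by block, hence `f̃` respects
intertwinings, and taking `T = 1` shows that `f̃` is well defined. A fixed point of `f̃` is a direct
sum of fixed points of `f` and copies of `Xs`, each of which is a direct sum of copies of `Xs`.
-/

section Blocks

@[simp]
lemma dSum_castAdd_castAdd (O : S) {n m : ℕ} (X : Matrix (Fin n) (Fin n) S)
    (Y : Matrix (Fin m) (Fin m) S) (i j : Fin n) :
    dSum O X Y (Fin.castAdd m i) (Fin.castAdd m j) = X i j := by
  simp [dSum]

@[simp]
lemma dSum_castAdd_natAdd (O : S) {n m : ℕ} (X : Matrix (Fin n) (Fin n) S)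
    (Y : Matrix (Fin m) (Fin m) S) (i : Fin n) (j : Fin m) :
    dSum O X Y (Fin.castAdd m i) (Fin.natAdd n j) = O := by
  simp [dSum]

@[simp]
lemma dSum_natAdd_castAdd (O : S) {n m : ℕ} (X : Matrix (Fin n) (Fin n) S)
    (Y : Matrix (Fin m) (Fin m) S) (i : Fin m) (j : Fin n) :
    dSum O X Y (Fin.natAdd n i) (Fin.castAdd m j) = O := by
  simp [dSum]

@[simp]
lemma dSum_natAdd_natAdd (O : S) {n m : ℕ} (X : Matrix (Fin n) (Fin n) S)
    (Y : Matrix (Fin m) (Fin m) S) (i j : Fin m) :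
    dSum O X Y (Fin.natAdd n i) (Fin.natAdd n j) = Y i j := by
  simp [dSum]

lemma dSum_inj {O : S} {n m : ℕ} {X X' : Matrix (Fin n) (Fin n) S}
    {Y Y' : Matrix (Fin m) (Fin m) S} (h : dSum O X Y = dSum O X' Y') : X = X' ∧ Y = Y' := by
  constructor <;> ext i j
  · simpa using congrFun₂ h (Fin.castAdd m i) (Fin.castAdd m j)
  · simpa using congrFun₂ h (Fin.natAdd n i) (Fin.natAdd n j)

/-- `⊕ Xs` at every size `n`, the last block truncated when `d ∤ n`. -/
def repBlocks (O : S) {d : ℕ} (hd : 0 < d) (Xs : Matrix (Fin d) (Fin d) S) (n : ℕ) :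
    Matrix (Fin n) (Fin n) S := fun i j =>
  if (i : ℕ) / d = (j : ℕ) / d then
    Xs ⟨(i : ℕ) % d, Nat.mod_lt _ hd⟩ ⟨(j : ℕ) % d, Nat.mod_lt _ hd⟩ else O

lemma castMat_repSum {O : S} {d k n : ℕ} (hd : 0 < d) (h : k * d = n)
    (Xs : Matrix (Fin d) (Fin d) S) : castMat h (repSum O k Xs) = repBlocks O hd Xs n :=
  rfl

lemma repBlocks_self {O : S} {d : ℕ} (hd : 0 < d) (Xs : Matrix (Fin d) (Fin d) S) :
    repBlocks O hd Xs d = Xs := by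
  ext i j
  simp [repBlocks, Nat.div_eq_of_lt, Nat.mod_eq_of_lt]

lemma dSum_repBlocks {O : S} {d n₁ n₂ : ℕ} (hd : 0 < d) (Xs : Matrix (Fin d) (Fin d) S)
    (h₁ : d ∣ n₁) :
    dSum O (repBlocks O hd Xs n₁) (repBlocks O hd Xs n₂) = repBlocks O hd Xs (n₁ + n₂) := by
  obtain ⟨a, rfl⟩ := h₁
  ext i j
  refine Fin.addCases (fun i => ?_) (fun i => ?_) i <;>
    refine Fin.addCases (fun j => ?_) (fun j => ?_) j <;>
    simp only [dSum_castAdd_castAdd, dSum_castAdd_natAdd, dSum_natAdd_castAdd,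
      dSum_natAdd_natAdd, repBlocks, Fin.val_castAdd, Fin.val_natAdd, Nat.mul_add_div hd,
      Nat.mul_add_mod, add_right_inj]
  · rw [if_neg ((Nat.div_lt_of_lt_mul i.isLt).trans_le (Nat.le_add_right _ _)).ne]
  · rw [if_neg ((Nat.div_lt_of_lt_mul j.isLt).trans_le (Nat.le_add_right _ _)).ne']

end Blocks

section Actions

variable {R M : Type*} [Ring R] [AddCommGroup M]

lemma lAct_zero [Module R M] {n m p : ℕ} (Y : Matrix (Fin m) (Fin p) M) :
    lAct R (0 : Matrix (Fin n) (Fin m) R) Y = 0 := by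
  ext i j
  simp [lAct]

lemma rAct_zero [Module Rᵐᵒᵖ M] {n m p : ℕ} (X : Matrix (Fin n) (Fin m) M) :
    rAct R X (0 : Matrix (Fin m) (Fin p) R) = 0 := by
  ext i j
  simp [rAct]

lemma lAct_one [Module R M] {n m : ℕ} (Y : Matrix (Fin n) (Fin m) M) :
    lAct R (1 : Matrix (Fin n) (Fin n) R) Y = Y := by
  ext i j
  simp [lAct, Matrix.one_apply]

lemma rAct_one [Module Rᵐᵒᵖ M] {n m : ℕ} (X : Matrix (Fin n) (Fin m) M) :
    rAct R X (1 : Matrix (Fin m) (Fin m) R) = X := by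
  ext i j
  simp [rAct, Matrix.one_apply, apply_ite MulOpposite.op]

lemma lAct_dSum_castAdd [Module R M] {n m₁ m₂ : ℕ} (T : Matrix (Fin n) (Fin (m₁ + m₂)) R)
    (Y₁ : Matrix (Fin m₁) (Fin m₁) M) (Y₂ : Matrix (Fin m₂) (Fin m₂) M) (i : Fin n)
    (k : Fin m₁) :
    lAct R T (dSum 0 Y₁ Y₂) i (Fin.castAdd m₂ k) =
      lAct R (T.submatrix id (Fin.castAdd m₂)) Y₁ i k := by
  simp [lAct, Fin.sum_univ_add]

lemma lAct_dSum_natAdd [Module R M] {n m₁ m₂ : ℕ} (T : Matrix (Fin n) (Fin (m₁ + m₂)) R)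
    (Y₁ : Matrix (Fin m₁) (Fin m₁) M) (Y₂ : Matrix (Fin m₂) (Fin m₂) M) (i : Fin n)
    (k : Fin m₂) :
    lAct R T (dSum 0 Y₁ Y₂) i (Fin.natAdd m₁ k) =
      lAct R (T.submatrix id (Fin.natAdd m₁)) Y₂ i k := by
  simp [lAct, Fin.sum_univ_add]

lemma rAct_dSum_castAdd [Module Rᵐᵒᵖ M] {n₁ n₂ m : ℕ} (X₁ : Matrix (Fin n₁) (Fin n₁) M)
    (X₂ : Matrix (Fin n₂) (Fin n₂) M) (T : Matrix (Fin (n₁ + n₂)) (Fin m) R) (k : Fin n₁)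
    (j : Fin m) :
    rAct R (dSum 0 X₁ X₂) T (Fin.castAdd n₂ k) j =
      rAct R X₁ (T.submatrix (Fin.castAdd n₂) id) k j := by
  simp [rAct, Fin.sum_univ_add]

lemma rAct_dSum_natAdd [Module Rᵐᵒᵖ M] {n₁ n₂ m : ℕ} (X₁ : Matrix (Fin n₁) (Fin n₁) M)
    (X₂ : Matrix (Fin n₂) (Fin n₂) M) (T : Matrix (Fin (n₁ + n₂)) (Fin m) R) (k : Fin n₂)
    (j : Fin m) :
    rAct R (dSum 0 X₁ X₂) T (Fin.natAdd n₁ k) j =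
      rAct R X₂ (T.submatrix (Fin.natAdd n₁) id) k j := by
  simp [rAct, Fin.sum_univ_add]

end Actions

section Intertwiners

variable (R : Type*) {M : Type*} [Ring R] [AddCommGroup M] [Module R M] [Module Rᵐᵒᵖ M]

def PreservesIntertwiners {n m : ℕ} (X X' : Matrix (Fin n) (Fin n) M)
    (Y Y' : Matrix (Fin m) (Fin m) M) : Prop :=
  ∀ T : Matrix (Fin n) (Fin m) R, rAct R X T = lAct R T Y → rAct R X' T = lAct R T Y'

variable {R}

namespace PreservesIntertwiners

variable {n m n₁ n₂ m₁ m₂ : ℕ} {X X' : Matrix (Fin n) (Fin n) M}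
  {Y Y' : Matrix (Fin m) (Fin m) M} {X₁ X₁' : Matrix (Fin n₁) (Fin n₁) M}
  {X₂ X₂' : Matrix (Fin n₂) (Fin n₂) M} {Y₁ Y₁' : Matrix (Fin m₁) (Fin m₁) M}
  {Y₂ Y₂' : Matrix (Fin m₂) (Fin m₂) M}

lemma dSum_left (h₁ : PreservesIntertwiners R X₁ X₁' Y Y')
    (h₂ : PreservesIntertwiners R X₂ X₂' Y Y') :
    PreservesIntertwiners R (dSum 0 X₁ X₂) (dSum 0 X₁' X₂') Y Y' := by
  intro T hT
  have hT₁ := h₁ (T.submatrix (Fin.castAdd n₂) id) <| by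
    ext k j
    rw [← rAct_dSum_castAdd, hT]
    rfl
  have hT₂ := h₂ (T.submatrix (Fin.natAdd n₁) id) <| by
    ext k j
    rw [← rAct_dSum_natAdd, hT]
    rfl
  ext i j
  refine Fin.addCases (fun k => ?_) (fun k => ?_) i
  · rw [rAct_dSum_castAdd, hT₁]
    rfl
  · rw [rAct_dSum_natAdd, hT₂]
    rfl

lemma dSum_right (h₁ : PreservesIntertwiners R X X' Y₁ Y₁')
    (h₂ : PreservesIntertwiners R X X' Y₂ Y₂') :
    PreservesIntertwiners R X X' (dSum 0 Y₁ Y₂) (dSum 0 Y₁' Y₂') := by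
  intro T hT
  have hT₁ := h₁ (T.submatrix id (Fin.castAdd m₂)) <| by
    ext i k
    rw [← lAct_dSum_castAdd, ← hT]
    rfl
  have hT₂ := h₂ (T.submatrix id (Fin.natAdd m₁)) <| by
    ext i k
    rw [← lAct_dSum_natAdd, ← hT]
    rfl
  ext i j
  refine Fin.addCases (fun k => ?_) (fun k => ?_) j
  · rw [lAct_dSum_castAdd, ← hT₁]
    rfl
  · rw [lAct_dSum_natAdd, ← hT₂]
    rfl

lemma of_dSum_left (h : PreservesIntertwiners R (dSum 0 X₁ X₂) (dSum 0 X₁' X₂') Y Y') :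
    PreservesIntertwiners R X₁ X₁' Y Y' := by
  intro T hT
  set T' : Matrix (Fin (n₁ + n₂)) (Fin m) R := Fin.append T 0
  have hT₁ : T'.submatrix (Fin.castAdd n₂) id = T := funext (Fin.append_left T 0)
  have hT₂ : T'.submatrix (Fin.natAdd n₁) id = 0 := funext (Fin.append_right T 0)
  have hT' : rAct R (dSum 0 X₁ X₂) T' = lAct R T' Y := by
    ext i j
    refine Fin.addCases (fun k => ?_) (fun k => ?_) i
    · rw [rAct_dSum_castAdd, hT₁, hT, ← hT₁]
      rfl
    · rw [rAct_dSum_natAdd, hT₂, rAct_zero, ← lAct_zero (R := R) (n := n₂) Y, ← hT₂]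
      rfl
  ext k j
  rw [← hT₁, ← rAct_dSum_castAdd (X₂ := X₂'), h T' hT']
  rfl

lemma of_dSum_right (h : PreservesIntertwiners R X X' (dSum 0 Y₁ Y₂) (dSum 0 Y₁' Y₂')) :
    PreservesIntertwiners R X X' Y₁ Y₁' := by
  intro T hT
  set T' : Matrix (Fin n) (Fin (m₁ + m₂)) R := fun i => Fin.append (T i) 0
  have hT₁ : T'.submatrix id (Fin.castAdd m₂) = T :=
    funext fun i => funext (Fin.append_left (T i) 0)
  have hT₂ : T'.submatrix id (Fin.natAdd m₁) = 0 :=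
    funext fun i => funext (Fin.append_right (T i) 0)
  have hT' : rAct R X T' = lAct R T' (dSum 0 Y₁ Y₂) := by
    ext i j
    refine Fin.addCases (fun k => ?_) (fun k => ?_) j
    · rw [lAct_dSum_castAdd, hT₁, ← hT, ← hT₁]
      rfl
    · rw [lAct_dSum_natAdd, hT₂, lAct_zero, ← rAct_zero (R := R) (p := m₂) X, ← hT₂]
      rfl
  ext i k
  rw [← hT₁, ← lAct_dSum_castAdd (Y₂ := Y₂'), ← h T' hT']
  rfl

end PreservesIntertwiners

lemma RespectsIntertwinings.preservesIntertwiners {Ω : ∀ n : ℕ, Set (Matrix (Fin n) (Fin n) M)}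
    {f : ∀ n : ℕ, Matrix (Fin n) (Fin n) M → Matrix (Fin n) (Fin n) M}
    (hint : RespectsIntertwinings R Ω f) {n m : ℕ} {X : Matrix (Fin n) (Fin n) M}
    {Y : Matrix (Fin m) (Fin m) M} (hX : X ∈ Ω n) (hY : Y ∈ Ω m) :
    PreservesIntertwiners R X (f n X) Y (f m Y) :=
  fun T => hint X Y T hX hY

end Intertwiners

lemma mem_supp_of_mem {Ω : ∀ n : ℕ, Set (Matrix (Fin n) (Fin n) S)} (hΩ0 : Ω 0 = ∅) {n : ℕ}
    {X : Matrix (Fin n) (Fin n) S} (hX : X ∈ Ω n) : n ∈ supp Ω := by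
  refine ⟨Nat.pos_of_ne_zero ?_, X, hX⟩
  rintro rfl
  simp [hΩ0] at hX

section Extension

variable {M : Type*}

/-- The graph of the extension `f̃`: `X` is an ordered direct sum of elements of `Ω` and copies
of `Xs`, and `X'` applies `f` to the former and fixes the latter. -/
inductive ExtRel [Zero M] (Ω : ∀ n : ℕ, Set (Matrix (Fin n) (Fin n) M))
    (f : ∀ n : ℕ, Matrix (Fin n) (Fin n) M → Matrix (Fin n) (Fin n) M) {d : ℕ}
    (Xs : Matrix (Fin d) (Fin d) M) :
    ∀ n : ℕ, Matrix (Fin n) (Fin n) M → Matrix (Fin n) (Fin n) M → Prop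
  | base {n : ℕ} {X : Matrix (Fin n) (Fin n) M} (hX : X ∈ Ω n) : ExtRel Ω f Xs n X (f n X)
  | fixedBlock : ExtRel Ω f Xs d Xs Xs
  | sum {n m : ℕ} {X X' : Matrix (Fin n) (Fin n) M} {Y Y' : Matrix (Fin m) (Fin m) M}
      (hX : ExtRel Ω f Xs n X X') (hY : ExtRel Ω f Xs m Y Y') :
      ExtRel Ω f Xs (n + m) (dSum 0 X Y) (dSum 0 X' Y')

namespace ExtRel

variable [Zero M] {Ω : ∀ n : ℕ, Set (Matrix (Fin n) (Fin n) M)}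
  {f : ∀ n : ℕ, Matrix (Fin n) (Fin n) M → Matrix (Fin n) (Fin n) M} {d : ℕ}
  {Xs : Matrix (Fin d) (Fin d) M} {n : ℕ} {X X' : Matrix (Fin n) (Fin n) M}

lemma dvd (hdvd : ∀ n, ∀ X ∈ Ω n, d ∣ n) (h : ExtRel Ω f Xs n X X') : d ∣ n := by
  induction h with
  | base hX => exact hdvd _ _ hX
  | fixedBlock => exact dvd_rfl
  | sum _ _ ih₁ ih₂ => exact dvd_add ih₁ ih₂

lemma exists_next (hmaps : ∀ n, ∀ X ∈ Ω n, f n X ∈ Ω n) (h : ExtRel Ω f Xs n X X') :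
    ∃ X'', ExtRel Ω f Xs n X' X'' := by
  induction h with
  | base hX => exact ⟨_, base (hmaps _ _ hX)⟩
  | fixedBlock => exact ⟨Xs, fixedBlock⟩
  | sum _ _ ih₁ ih₂ =>
    obtain ⟨_, h₁⟩ := ih₁
    obtain ⟨_, h₂⟩ := ih₂
    exact ⟨_, h₁.sum h₂⟩

lemma eq_repBlocks (hd : 0 < d) (hdvd : ∀ n, ∀ X ∈ Ω n, d ∣ n)
    (hfix : ∀ n, ∀ A ∈ Ω n, f n A = A → A = repBlocks 0 hd Xs n)
    (h : ExtRel Ω f Xs n X X') (hX : X' = X) : X = repBlocks 0 hd Xs n := by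
  induction h with
  | base hA => exact hfix _ _ hA hX
  | fixedBlock => exact (repBlocks_self hd Xs).symm
  | sum h₁ _ ih₁ ih₂ =>
    obtain ⟨hX₁, hX₂⟩ := dSum_inj hX
    rw [ih₁ hX₁, ih₂ hX₂, dSum_repBlocks hd Xs (h₁.dvd hdvd)]

end ExtRel

lemma extRel_repBlocks [Zero M] {Ω : ∀ n : ℕ, Set (Matrix (Fin n) (Fin n) M)}
    {f : ∀ n : ℕ, Matrix (Fin n) (Fin n) M → Matrix (Fin n) (Fin n) M} {d : ℕ} (hd : 0 < d)
    (Xs : Matrix (Fin d) (Fin d) M) {n : ℕ} (hn : 0 < n) (hdn : d ∣ n) :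
    ExtRel Ω f Xs n (repBlocks 0 hd Xs n) (repBlocks 0 hd Xs n) := by
  obtain ⟨k, rfl⟩ := hdn
  induction k, Nat.pos_of_mul_pos_left hn using Nat.le_induction with
  | base =>
    rw [Nat.mul_one, repBlocks_self]
    exact .fixedBlock
  | succ k hk ih =>
    rw [Nat.mul_succ, ← dSum_repBlocks hd Xs (dvd_mul_right d k), repBlocks_self]
    exact (ih (by positivity)).sum .fixedBlock

def extDomain [Zero M] (Ω : ∀ n : ℕ, Set (Matrix (Fin n) (Fin n) M))
    (f : ∀ n : ℕ, Matrix (Fin n) (Fin n) M → Matrix (Fin n) (Fin n) M) {d : ℕ}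
    (Xs : Matrix (Fin d) (Fin d) M) (n : ℕ) : Set (Matrix (Fin n) (Fin n) M) :=
  {Z | 0 < n ∧ ∃ W, ExtRel Ω f Xs n Z W}

open Classical in
noncomputable def extMap [Zero M] (Ω : ∀ n : ℕ, Set (Matrix (Fin n) (Fin n) M))
    (f : ∀ n : ℕ, Matrix (Fin n) (Fin n) M → Matrix (Fin n) (Fin n) M) {d : ℕ}
    (Xs : Matrix (Fin d) (Fin d) M) (n : ℕ) (Z : Matrix (Fin n) (Fin n) M) :
    Matrix (Fin n) (Fin n) M :=
  if h : ∃ W, ExtRel Ω f Xs n Z W then h.choose else Z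

section Zero

variable [Zero M] {Ω : ∀ n : ℕ, Set (Matrix (Fin n) (Fin n) M)}
  {f : ∀ n : ℕ, Matrix (Fin n) (Fin n) M → Matrix (Fin n) (Fin n) M} {d : ℕ}
  {Xs : Matrix (Fin d) (Fin d) M} {n : ℕ} {Z : Matrix (Fin n) (Fin n) M}

lemma extRel_extMap {W : Matrix (Fin n) (Fin n) M} (h : ExtRel Ω f Xs n Z W) :
    ExtRel Ω f Xs n Z (extMap Ω f Xs n Z) := by
  rw [extMap, dif_pos ⟨W, h⟩]
  exact Exists.choose_spec (p := ExtRel Ω f Xs n Z) ⟨W, h⟩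

lemma extDomain_zero : extDomain Ω f Xs 0 = ∅ := by
  simp [extDomain]

lemma subset_extDomain (hΩ0 : Ω 0 = ∅) (n : ℕ) : Ω n ⊆ extDomain Ω f Xs n :=
  fun _ hZ => ⟨(mem_supp_of_mem hΩ0 hZ).1, _, .base hZ⟩

lemma respectsDSums_extDomain : RespectsDSums 0 (extDomain Ω f Xs) :=
  fun _ _ _ _ ⟨hn, _, hX⟩ ⟨_, _, hY⟩ => ⟨by omega, _, hX.sum hY⟩

lemma supp_extDomain (hd : 0 < d) (hdvd : ∀ n, ∀ X ∈ Ω n, d ∣ n) :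
    supp (extDomain Ω f Xs) = {n | 0 < n ∧ d ∣ n} := by
  ext n
  constructor
  · rintro ⟨hn, _, -, _, h⟩
    exact ⟨hn, h.dvd hdvd⟩
  · rintro ⟨hn, hdn⟩
    exact ⟨hn, _, hn, _, extRel_repBlocks hd Xs hn hdn⟩

lemma eq_repBlocks_of_extMap_eq_self (hd : 0 < d) (hdvd : ∀ n, ∀ X ∈ Ω n, d ∣ n)
    (hfix : ∀ n, ∀ A ∈ Ω n, f n A = A → A = repBlocks 0 hd Xs n) (hZ : Z ∈ extDomain Ω f Xs n)
    (hfZ : extMap Ω f Xs n Z = Z) : Z = repBlocks 0 hd Xs n :=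
  (extRel_extMap hZ.2.choose_spec).eq_repBlocks hd hdvd hfix hfZ

lemma extMap_mem_extDomain (hmaps : ∀ n, ∀ X ∈ Ω n, f n X ∈ Ω n)
    (hZ : Z ∈ extDomain Ω f Xs n) : extMap Ω f Xs n Z ∈ extDomain Ω f Xs n :=
  ⟨hZ.1, (extRel_extMap hZ.2.choose_spec).exists_next hmaps⟩

end Zero

section Module

variable {R : Type*} [Ring R] [AddCommGroup M] [Module R M] [Module Rᵐᵒᵖ M]
  {Ω : ∀ n : ℕ, Set (Matrix (Fin n) (Fin n) M)}
  {f : ∀ n : ℕ, Matrix (Fin n) (Fin n) M → Matrix (Fin n) (Fin n) M} {d r : ℕ}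
  {Xs : Matrix (Fin d) (Fin d) M} {Xr : Matrix (Fin r) (Fin r) M}

lemma ExtRel.preservesIntertwiners (hint : RespectsIntertwinings R Ω f)
    (hX₀ : dSum 0 Xs Xr ∈ Ω (d + r)) (hfX₀ : f (d + r) (dSum 0 Xs Xr) = dSum 0 Xs Xr) {n m : ℕ} {X X' : Matrix (Fin n) (Fin n) M} {Y Y' : Matrix (Fin m) (Fin m) M}
    (h₁ : ExtRel Ω f Xs n X X') (h₂ : ExtRel Ω f Xs m Y Y') :
    PreservesIntertwiners R X X' Y Y' := by
  induction h₁ with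
  | base hA =>
    induction h₂ with
    | base hB => exact hint.preservesIntertwiners hA hB
    | fixedBlock => exact (hfX₀ ▸ hint.preservesIntertwiners hA hX₀).of_dSum_right
    | sum _ _ ih₁ ih₂ => exact ih₁.dSum_right ih₂
  | fixedBlock =>
    induction h₂ with
    | base hB => exact (hfX₀ ▸ hint.preservesIntertwiners hX₀ hB).of_dSum_left
    | fixedBlock => exact fun _ => id
    | sum _ _ ih₁ ih₂ => exact ih₁.dSum_right ih₂
  | sum _ _ ih₁ ih₂ => exact ih₁.dSum_left ih₂

lemma extMap_eq (hint : RespectsIntertwinings R Ω f) (hX₀ : dSum 0 Xs Xr ∈ Ω (d + r))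
    (hfX₀ : f (d + r) (dSum 0 Xs Xr) = dSum 0 Xs Xr) {n : ℕ} {Z W : Matrix (Fin n) (Fin n) M}
    (h : ExtRel Ω f Xs n Z W) : extMap Ω f Xs n Z = W := by
  have := (extRel_extMap h).preservesIntertwiners hint hX₀ hfX₀ h 1
  rw [rAct_one, lAct_one, rAct_one, lAct_one] at this
  exact this rfl

lemma respectsIntertwinings_extMap (hint : RespectsIntertwinings R Ω f)
    (hX₀ : dSum 0 Xs Xr ∈ Ω (d + r)) (hfX₀ : f (d + r) (dSum 0 Xs Xr) = dSum 0 Xs Xr) :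
    RespectsIntertwinings R (extDomain Ω f Xs) (extMap Ω f Xs) :=
  fun _ _ _ _ T hX hY =>
    (extRel_extMap hX.2.choose_spec).preservesIntertwiners hint hX₀ hfX₀
      (extRel_extMap hY.2.choose_spec) T

lemma extMap_dSum (hint : RespectsIntertwinings R Ω f) (hX₀ : dSum 0 Xs Xr ∈ Ω (d + r))
    (hfX₀ : f (d + r) (dSum 0 Xs Xr) = dSum 0 Xs Xr) {n m : ℕ} {X : Matrix (Fin n) (Fin n) M}
    {Y : Matrix (Fin m) (Fin m) M} (hX : X ∈ extDomain Ω f Xs n) (hY : Y ∈ extDomain Ω f Xs m) :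
    extMap Ω f Xs (n + m) (dSum 0 X Y) = dSum 0 (extMap Ω f Xs n X) (extMap Ω f Xs m Y) :=
  extMap_eq hint hX₀ hfX₀ ((extRel_extMap hX.2.choose_spec).sum (extRel_extMap hY.2.choose_spec))

end Module

end Extension

theorem fixed_point_theorem_part2_general {R M : Type*} [Ring R] [AddCommGroup M]
    [Module R M] [Module Rᵐᵒᵖ M]
    (Ω : ∀ n : ℕ, Set (Matrix (Fin n) (Fin n) M)) (hΩ0 : Ω 0 = ∅)
    (hne : (supp Ω).Nonempty)
    (f : ∀ n : ℕ, Matrix (Fin n) (Fin n) M → Matrix (Fin n) (Fin n) M)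
    (hmaps : ∀ n ∈ supp Ω, ∀ X ∈ Ω n, f n X ∈ Ω n)
    (hint : RespectsIntertwinings R Ω f)
    (Xst : ∀ n : ℕ, Matrix (Fin n) (Fin n) M)
    (hfix : ∀ n ∈ supp Ω, Xst n ∈ Ω n ∧ f n (Xst n) = Xst n ∧
      ∀ Y ∈ Ω n, f n Y = Y → Y = Xst n)
    (d : ℕ) (hdvd : ∀ n ∈ supp Ω, d ∣ n)
    (Xs : Matrix (Fin d) (Fin d) M)
    (hXs : ∀ n, ∀ hn : n ∈ supp Ω,
      Xst n = castMat (Nat.div_mul_cancel (hdvd n hn)) (repSum 0 (n / d) Xs)) :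
    ∃ (Ωt : ∀ n : ℕ, Set (Matrix (Fin n) (Fin n) M))
      (ft : ∀ n : ℕ, Matrix (Fin n) (Fin n) M → Matrix (Fin n) (Fin n) M),
      Ωt 0 = ∅ ∧ (∀ n, Ω n ⊆ Ωt n) ∧ RespectsDSums (0 : M) Ωt ∧
      supp Ωt = {n : ℕ | 0 < n ∧ d ∣ n} ∧
      (∀ n ∈ supp Ωt, ∀ X ∈ Ωt n, ft n X ∈ Ωt n) ∧
      (∀ ⦃n m : ℕ⦄ (X : Matrix (Fin n) (Fin n) M) (Y : Matrix (Fin m) (Fin m) M),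
        X ∈ Ωt n → Y ∈ Ωt m → ft (n + m) (dSum 0 X Y) = dSum 0 (ft n X) (ft m Y)) ∧
      RespectsIntertwinings R Ωt ft ∧
      (∀ n, ∀ X ∈ Ω n, ft n X = f n X) ∧
      (∀ n : ℕ, ∀ hn : 0 < n ∧ d ∣ n,
        castMat (Nat.div_mul_cancel hn.2) (repSum 0 (n / d) Xs) ∈ Ωt n ∧
        ft n (castMat (Nat.div_mul_cancel hn.2) (repSum 0 (n / d) Xs)) =
          castMat (Nat.div_mul_cancel hn.2) (repSum 0 (n / d) Xs) ∧
        ∀ Y ∈ Ωt n, ft n Y = Y →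
          Y = castMat (Nat.div_mul_cancel hn.2) (repSum 0 (n / d) Xs)) := by
  obtain ⟨n₀, hn₀⟩ := hne
  have hd : 0 < d := Nat.pos_of_dvd_of_pos (hdvd n₀ hn₀) hn₀.1
  have hdvdΩ : ∀ n, ∀ X ∈ Ω n, d ∣ n := fun n _ hX => hdvd n (mem_supp_of_mem hΩ0 hX)
  have hmapsΩ : ∀ n, ∀ X ∈ Ω n, f n X ∈ Ω n := fun n X hX =>
    hmaps n (mem_supp_of_mem hΩ0 hX) X hX
  have hfixΩ : ∀ n, ∀ A ∈ Ω n, f n A = A → A = repBlocks 0 hd Xs n := fun n A hA hfA => by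
    have hn := mem_supp_of_mem hΩ0 hA
    exact ((hfix n hn).2.2 A hA hfA).trans (hXs n hn)
  obtain ⟨r, rfl⟩ := Nat.exists_eq_add_of_le (Nat.le_of_dvd hn₀.1 (hdvd _ hn₀))
  have hX₀ : Xst (d + r) = dSum 0 Xs (repBlocks 0 hd Xs r) := by
    rw [hXs _ hn₀, castMat_repSum hd, ← dSum_repBlocks hd Xs dvd_rfl, repBlocks_self]
  obtain ⟨hmem₀, hfix₀, -⟩ := hfix _ hn₀
  rw [hX₀] at hmem₀ hfix₀
  refine ⟨extDomain Ω f Xs, extMap Ω f Xs, extDomain_zero, subset_extDomain hΩ0,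
    respectsDSums_extDomain, supp_extDomain hd hdvdΩ,
    fun _ _ _ hX => extMap_mem_extDomain hmapsΩ hX,
    fun _ _ _ _ hX hY => extMap_dSum hint hmem₀ hfix₀ hX hY,
    respectsIntertwinings_extMap hint hmem₀ hfix₀,
    fun _ _ hX => extMap_eq hint hmem₀ hfix₀ (.base hX), fun n hn => ?_⟩
  have h := extRel_repBlocks (Ω := Ω) (f := f) hd Xs hn.1 hn.2
  exact ⟨⟨hn.1, _, h⟩, extMap_eq hint hmem₀ hfix₀ h,
    fun _ hY hfY => eq_repBlocks_of_extMap_eq_self hd hdvdΩ hfixΩ hY hfY⟩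

/-- **Theorem A, part 2.** A nc function `f` on a direct-sum-closed subset `Ω` of the nc space
over a bimodule `M`, with a unique fixed point at every level of the support, extends to a nc
function `ft` on a nc set `Ωt ⊇ Ω` whose support is all positive multiples of
`d = gcd (supp Ω)`, with unique fixed point `⊕_{α=1}^{n/d} Xs` at every level. -/
theorem fixed_point_theorem_part2 {R M : Type*} [Ring R] [AddCommGroup M]
    [Module R M] [Module Rᵐᵒᵖ M] [SMulCommClass R Rᵐᵒᵖ M]
    (Ω : ∀ n : ℕ, Set (Matrix (Fin n) (Fin n) M)) (hΩ0 : Ω 0 = ∅)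
    (hdir : RespectsDSums (0 : M) Ω) (hne : (supp Ω).Nonempty)
    (f : ∀ n : ℕ, Matrix (Fin n) (Fin n) M → Matrix (Fin n) (Fin n) M)
    (hmaps : ∀ n ∈ supp Ω, ∀ X ∈ Ω n, f n X ∈ Ω n)
    (hsums : ∀ ⦃n m : ℕ⦄ (X : Matrix (Fin n) (Fin n) M) (Y : Matrix (Fin m) (Fin m) M),
      X ∈ Ω n → Y ∈ Ω m → f (n + m) (dSum 0 X Y) = dSum 0 (f n X) (f m Y))
    (hint : RespectsIntertwinings R Ω f)
    (Xst : ∀ n : ℕ, Matrix (Fin n) (Fin n) M)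
    (hfix : ∀ n ∈ supp Ω, Xst n ∈ Ω n ∧ f n (Xst n) = Xst n ∧
      ∀ Y ∈ Ω n, f n Y = Y → Y = Xst n)
    (d : ℕ) (hdvd : ∀ n ∈ supp Ω, d ∣ n)
    (hgcd : ∀ e : ℕ, (∀ n ∈ supp Ω, e ∣ n) → e ∣ d)
    (Xs : Matrix (Fin d) (Fin d) M)
    (hXs : ∀ n, ∀ hn : n ∈ supp Ω,
      Xst n = castMat (Nat.div_mul_cancel (hdvd n hn)) (repSum 0 (n / d) Xs)) :
    ∃ (Ωt : ∀ n : ℕ, Set (Matrix (Fin n) (Fin n) M))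
      (ft : ∀ n : ℕ, Matrix (Fin n) (Fin n) M → Matrix (Fin n) (Fin n) M),
      Ωt 0 = ∅ ∧ (∀ n, Ω n ⊆ Ωt n) ∧ RespectsDSums (0 : M) Ωt ∧
      supp Ωt = {n : ℕ | 0 < n ∧ d ∣ n} ∧
      (∀ n ∈ supp Ωt, ∀ X ∈ Ωt n, ft n X ∈ Ωt n) ∧
      (∀ ⦃n m : ℕ⦄ (X : Matrix (Fin n) (Fin n) M) (Y : Matrix (Fin m) (Fin m) M),
        X ∈ Ωt n → Y ∈ Ωt m → ft (n + m) (dSum 0 X Y) = dSum 0 (ft n X) (ft m Y)) ∧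
      RespectsIntertwinings R Ωt ft ∧
      (∀ n, ∀ X ∈ Ω n, ft n X = f n X) ∧
      (∀ n : ℕ, ∀ hn : 0 < n ∧ d ∣ n,
        castMat (Nat.div_mul_cancel hn.2) (repSum 0 (n / d) Xs) ∈ Ωt n ∧
        ft n (castMat (Nat.div_mul_cancel hn.2) (repSum 0 (n / d) Xs)) =
          castMat (Nat.div_mul_cancel hn.2) (repSum 0 (n / d) Xs) ∧
        ∀ Y ∈ Ωt n, ft n Y = Y →
          Y = castMat (Nat.div_mul_cancel hn.2) (repSum 0 (n / d) Xs)) :=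
  fixed_point_theorem_part2_general Ω hΩ0 hne f hmaps hint Xst hfix d hdvd Xs hXs

end NCPaper
end

section
/- There exist a set Ω ⊆ (ℤ/2ℤ)_nc respecting direct sums of matrices with supp Ω = {2n + 5m : n, m nonnegative integers, not both zero} (so that gcd{n : n ∈ supp Ω} = 1) and a mapping f : Ω → Ω with f(Ω_n) ⊆ Ω_n for all n ∈ supp Ω, respecting direct sums, and having a unique fixed point in Ω_n for every n ∈ supp Ω, such that there do NOT exist a set Ω̃ ⊆ (ℤ/2ℤ)_nc respecting direct sums with Ω̃ ⊇ Ω and supp Ω̃ = ℕ, a mapping f̃ : Ω̃ → Ω̃ with f̃(Ω̃_n) ⊆ Ω̃_n for all n, respecting direct sums, with f̃ restricted to Ω equal to f, and an element X_* ∈ (ℤ/2ℤ)^{1×1} such that for every n ∈ ℕ the mapping f̃ restricted to Ω̃_n has a unique fixed point equal to ⊕_{α=1}^n X_*. -/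
namespace NCPaper

variable {S : Type*}

/-!
`Ω` consists of the direct sums of the atoms `0`, `A = E₁₂`, `B = E₂₁` of size 2 and `0`,
`Y = A ⊕ 0₁ ⊕ B` of size 5, and `f` acts blockwise by `A ↦ B`, `B ↦ A`, `Y ↦ 0`, `0 ↦ 0`, so `0`
is the only fixed point at every level. An extension whose fixed points are `⊕ⁿ X_*` must have
`X_* = 0`, because `0 ∈ Ω₂` is fixed; then `0₁ ∈ Ω̃₁`, and additivity on `Y = A ⊕ 0₁ ⊕ B` forces
`f̃ Y = B ⊕ 0₁ ⊕ A`, whereas `f Y = 0`.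

For `f` to be well defined on direct sums it is given by a local rule, `twist`, on the extensions
of the matrices by zero to `ℕ × ℕ`, where direct sums of all sizes become one operation `infDSum`.
-/

section InfiniteMatrices

variable [Zero S] {k n m p q : ℕ} {a a' W W' : Matrix ℕ ℕ S}

def infDSum (k : ℕ) (a W : Matrix ℕ ℕ S) : Matrix ℕ ℕ S := fun p q =>
  if p < k ∧ q < k then a p q
  else if k ≤ p ∧ k ≤ q then W (p - k) (q - k) else 0

def SupportedIn (n : ℕ) (W : Matrix ℕ ℕ S) : Prop := ∀ p q, n ≤ p ∨ n ≤ q → W p q = 0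

lemma infDSum_apply_of_lt (hp : p < k) (hq : q < k) : infDSum k a W p q = a p q :=
  if_pos ⟨hp, hq⟩

lemma infDSum_apply_add (p q : ℕ) : infDSum k a W (k + p) (k + q) = W p q := by
  simp [infDSum]

lemma infDSum_apply_of_lt_of_le (hp : p < k) (hq : k ≤ q) : infDSum k a W p q = 0 := by
  unfold infDSum; rw [if_neg (by omega), if_neg (by omega)]

lemma infDSum_apply_of_le_of_lt (hp : k ≤ p) (hq : q < k) : infDSum k a W p q = 0 := by
  unfold infDSum; rw [if_neg (by omega), if_neg (by omega)]

@[simp]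
lemma infDSum_zero_left : infDSum 0 a W = W := by
  ext p q; simp [infDSum]

@[simp]
lemma infDSum_zero_zero : infDSum k (0 : Matrix ℕ ℕ S) 0 = 0 := by
  ext p q; simp [infDSum]

lemma infDSum_zero_right (ha : SupportedIn k a) : infDSum k a 0 = a := by
  ext p q
  by_cases hpq : p < k ∧ q < k
  · exact infDSum_apply_of_lt hpq.1 hpq.2
  · simp only [infDSum, if_neg hpq]
    split_ifs <;> simp [ha p q (by omega)]

lemma infDSum_assoc (k n : ℕ) (a X W : Matrix ℕ ℕ S) :
    infDSum (k + n) (infDSum k a X) W = infDSum k a (infDSum n X W) := by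
  ext p q
  simp only [infDSum]
  split_ifs <;> first | rfl | omega | (congr 1 <;> omega)

lemma infDSum_inj (ha : SupportedIn k a) (ha' : SupportedIn k a') :
    infDSum k a W = infDSum k a' W' ↔ a = a' ∧ W = W' := by
  refine ⟨fun h => ⟨?_, ?_⟩, fun ⟨ha, hW⟩ => ha ▸ hW ▸ rfl⟩
  · ext p q
    by_cases hpq : p < k ∧ q < k
    · simpa [infDSum_apply_of_lt hpq.1 hpq.2] using congrFun (congrFun h p) q
    · rw [ha p q (by omega), ha' p q (by omega)]
  · ext p q
    simpa [infDSum_apply_add] using congrFun (congrFun h (k + p)) (k + q)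

def extendZero (M : Matrix (Fin n) (Fin n) S) : Matrix ℕ ℕ S := fun p q =>
  if h : p < n ∧ q < n then M ⟨p, h.1⟩ ⟨q, h.2⟩ else 0

def corner (n : ℕ) (W : Matrix ℕ ℕ S) : Matrix (Fin n) (Fin n) S := fun i j => W i j

lemma supportedIn_extendZero (M : Matrix (Fin n) (Fin n) S) : SupportedIn n (extendZero M) := by
  intro p q h
  simp only [extendZero]
  rw [dif_neg (by omega)]

@[simp]
lemma corner_extendZero (M : Matrix (Fin n) (Fin n) S) : corner n (extendZero M) = M := by
  ext i j
  simp [corner, extendZero]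

lemma extendZero_corner (h : SupportedIn n W) : extendZero (corner n W) = W := by
  ext p q
  simp only [extendZero, corner]
  split_ifs with hpq
  · rfl
  · exact (h p q (by omega)).symm

lemma extendZero_injective : Function.Injective (extendZero : Matrix (Fin n) (Fin n) S → _) :=
  Function.LeftInverse.injective corner_extendZero

@[simp]
lemma extendZero_zero : extendZero (0 : Matrix (Fin n) (Fin n) S) = 0 := by
  ext p q
  simp [extendZero]

lemma extendZero_dSum (X : Matrix (Fin n) (Fin n) S) (Y : Matrix (Fin m) (Fin m) S) :
    extendZero (dSum 0 X Y) = infDSum n (extendZero X) (extendZero Y) := by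
  ext p q
  simp only [extendZero, infDSum, dSum]
  split_ifs <;> first | rfl | omega

end InfiniteMatrices

section Twist

variable {k n p q : ℕ} {a W : Matrix ℕ ℕ (ZMod 2)}

/-- Transpose on the first off-diagonals, except that both entries of every occurrence of the
pattern of `atomY` (ones at `(t, t + 1)` and `(t + 4, t + 3)`) are erased. -/
def twist (W : Matrix ℕ ℕ (ZMod 2)) : Matrix ℕ ℕ (ZMod 2) := fun p q =>
  if q = p + 1 then (if W q p = 1 ∧ ¬(3 ≤ p ∧ W (p - 3) (p - 2) = 1) then 1 else 0)
  else if p = q + 1 then (if W q p = 1 ∧ W (q + 4) (q + 3) ≠ 1 then 1 else 0)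
  else 0

lemma twist_apply_succ (W : Matrix ℕ ℕ (ZMod 2)) (p : ℕ) :
    twist W p (p + 1) = if W (p + 1) p = 1 ∧ ¬(3 ≤ p ∧ W (p - 3) (p - 2) = 1) then 1 else 0 :=
  if_pos rfl

lemma twist_apply_succ_left (W : Matrix ℕ ℕ (ZMod 2)) (q : ℕ) :
    twist W (q + 1) q = if W q (q + 1) = 1 ∧ W (q + 4) (q + 3) ≠ 1 then 1 else 0 := by
  unfold twist; rw [if_neg (by omega), if_pos rfl]

lemma twist_apply_of_ne (W : Matrix ℕ ℕ (ZMod 2)) (h : q ≠ p + 1) (h' : p ≠ q + 1) :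
    twist W p q = 0 := by
  simp [twist, h, h']

@[simp]
lemma twist_zero : twist 0 = 0 := by
  ext p q; simp [twist]

lemma SupportedIn.twist (h : SupportedIn n W) : SupportedIn n (twist W) := by
  intro p q hpq
  by_cases hq : q = p + 1
  · subst hq; simp [twist_apply_succ, h (p + 1) p (by omega)]
  by_cases hp : p = q + 1
  · subst hp; simp [twist_apply_succ_left, h q (q + 1) (by omega)]
  exact twist_apply_of_ne W hq hp

/-- No occurrence of the pattern erased by `twist` has its `(t, t + 1)` entry in the block `a` and
its `(t + 4, t + 3)` entry in the block `W` of `infDSum k a W`. -/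
def NoStraddle (k : ℕ) (a W : Matrix ℕ ℕ (ZMod 2)) : Prop :=
  ∀ t, t + 1 < k → k ≤ t + 3 → a t (t + 1) = 1 → W (t + 4 - k) (t + 3 - k) ≠ 1

lemma twist_infDSum_apply_succ (hcross : NoStraddle k a W) (p : ℕ) :
    twist (infDSum k a W) p (p + 1) = infDSum k (twist a) (twist W) p (p + 1) := by
  rw [twist_apply_succ]
  rcases lt_trichotomy (p + 1) k with hp | hp | hp
  · rw [infDSum_apply_of_lt hp (show p < k by omega), infDSum_apply_of_lt (show p < k by omega) hp,
      infDSum_apply_of_lt (show p - 3 < k by omega) (show p - 2 < k by omega), twist_apply_succ]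
  · rw [infDSum_apply_of_le_of_lt hp.ge (show p < k by omega),
      infDSum_apply_of_lt_of_le (show p < k by omega) hp.ge]
    simp
  obtain ⟨r, rfl⟩ := Nat.exists_eq_add_of_le (show k ≤ p by omega)
  rw [add_assoc, infDSum_apply_add, infDSum_apply_add, twist_apply_succ]
  rcases le_or_gt 3 r with hr | hr
  · rw [show k + r - 3 = k + (r - 3) by omega, show k + r - 2 = k + (r - 2) by omega,
      infDSum_apply_add]
    simp [hr, show 3 ≤ k + r by omega]
  have hno_kill : 3 ≤ k + r ∧ infDSum k a W (k + r - 3) (k + r - 2) = 1 → W (r + 1) r ≠ 1 := by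
    rintro ⟨h3, h1⟩
    rcases (show r = 2 ∨ r < 2 by omega) with rfl | hr2
    · rw [infDSum_apply_of_lt_of_le (by omega) (by omega)] at h1
      exact absurd h1 zero_ne_one
    rw [infDSum_apply_of_lt (by omega) (by omega), show k + r - 2 = k + r - 3 + 1 by omega] at h1
    have := hcross (k + r - 3) (by omega) (by omega) h1
    rwa [show k + r - 3 + 4 - k = r + 1 by omega, show k + r - 3 + 3 - k = r by omega] at this
  by_cases hW : W (r + 1) r = 1
  · simp [hW, show ¬ 3 ≤ r by omega, mt hno_kill (not_not.2 hW)]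
  · simp [hW]

lemma twist_infDSum_apply_succ_left (ha : SupportedIn k a) (hcross : NoStraddle k a W) (q : ℕ) :
    twist (infDSum k a W) (q + 1) q = infDSum k (twist a) (twist W) (q + 1) q := by
  rw [twist_apply_succ_left]
  rcases lt_trichotomy (q + 1) k with hq | hq | hq
  · rw [infDSum_apply_of_lt (show q < k by omega) hq, infDSum_apply_of_lt hq (show q < k by omega),
      twist_apply_succ_left]
    by_cases ha1 : a q (q + 1) = 1
    · have hkill : infDSum k a W (q + 4) (q + 3) ≠ 1 ↔ a (q + 4) (q + 3) ≠ 1 := by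
        rcases lt_or_ge (q + 4) k with h4 | h4
        · rw [infDSum_apply_of_lt h4 (by omega)]
        rw [ha _ _ (Or.inl h4)]
        rcases lt_or_ge (q + 3) k with h3 | h3
        · rw [infDSum_apply_of_le_of_lt h4 h3]
        rw [show q + 4 = k + (q + 4 - k) by omega, show q + 3 = k + (q + 3 - k) by omega,
          infDSum_apply_add]
        simpa using hcross q hq h3 ha1
      simp only [ha1, true_and, hkill]
    · simp [ha1]
  · rw [infDSum_apply_of_lt_of_le (show q < k by omega) hq.ge,
      infDSum_apply_of_le_of_lt hq.ge (show q < k by omega)]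
    simp
  obtain ⟨r, rfl⟩ := Nat.exists_eq_add_of_le (show k ≤ q by omega)
  rw [add_assoc, infDSum_apply_add, infDSum_apply_add, add_assoc, add_assoc, infDSum_apply_add,
    twist_apply_succ_left]

lemma twist_infDSum (ha : SupportedIn k a) (hcross : NoStraddle k a W) :
    twist (infDSum k a W) = infDSum k (twist a) (twist W) := by
  ext p q
  by_cases hq : q = p + 1
  · subst hq; exact twist_infDSum_apply_succ hcross p
  by_cases hp : p = q + 1
  · subst hp; exact twist_infDSum_apply_succ_left ha hcross q
  rw [twist_apply_of_ne _ hq hp]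
  unfold infDSum
  split_ifs
  · exact (twist_apply_of_ne _ hq hp).symm
  · exact (twist_apply_of_ne _ (by omega) (by omega)).symm
  · rfl

end Twist

def atomA : Matrix ℕ ℕ (ZMod 2) := fun p q => if p = 0 ∧ q = 1 then 1 else 0

def atomB : Matrix ℕ ℕ (ZMod 2) := fun p q => if p = 1 ∧ q = 0 then 1 else 0

def atomY : Matrix ℕ ℕ (ZMod 2) := fun p q => if (p = 0 ∧ q = 1) ∨ (p = 4 ∧ q = 3) then 1 else 0

inductive IsAtom : ℕ → Matrix ℕ ℕ (ZMod 2) → Prop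
  | zero_two : IsAtom 2 0
  | A : IsAtom 2 atomA
  | B : IsAtom 2 atomB
  | zero_five : IsAtom 5 0
  | Y : IsAtom 5 atomY

inductive IsWord : ℕ → Matrix ℕ ℕ (ZMod 2) → Prop
  | nil : IsWord 0 0
  | cons {k a n W} : IsAtom k a → IsWord n W → IsWord (k + n) (infDSum k a W)

lemma twist_atomA : twist atomA = atomB := by
  ext p q; simp only [twist, atomA, atomB]; split_ifs <;> simp_all

lemma twist_atomB : twist atomB = atomA := by
  ext p q; simp only [twist, atomA, atomB]; split_ifs <;> simp_all

lemma twist_atomY : twist atomY = 0 := by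
  ext p q; simp only [twist, atomY]; split_ifs <;> simp_all
  all_goals omega

lemma infDSum_atomA_atomB : infDSum 3 (infDSum 2 atomA 0) atomB = atomY := by
  ext p q; simp only [infDSum, atomY, atomA, atomB]; split_ifs <;> simp_all
  all_goals omega

namespace IsAtom

variable {k : ℕ} {a W : Matrix ℕ ℕ (ZMod 2)}

lemma size_eq (h : IsAtom k a) : k = 2 ∨ k = 5 := by
  cases h <;> simp

lemma supportedIn (h : IsAtom k a) : SupportedIn k a := by
  cases h <;> intro p q hpq <;> simp [atomA, atomB, atomY] <;> omega

lemma twist (h : IsAtom k a) : IsAtom k (twist a) := by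
  cases h
  · rw [twist_zero]; exact zero_two
  · rw [twist_atomA]; exact B
  · rw [twist_atomB]; exact A
  · rw [twist_zero]; exact zero_five
  · rw [twist_atomY]; exact zero_five

lemma eq_zero_of_twist_eq (h : IsAtom k a) (hfix : NCPaper.twist a = a) : a = 0 := by
  cases h
  · rfl
  · rw [twist_atomA] at hfix
    simpa [atomA, atomB] using congrFun (congrFun hfix 0) 1
  · rw [twist_atomB] at hfix
    simpa [atomA, atomB] using congrFun (congrFun hfix 1) 0
  · rfl
  · rw [← hfix, twist_atomY]

lemma infDSum_apply_two_one (h : IsAtom k a) : infDSum k a W 2 1 = 0 := by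
  cases h <;> simp [infDSum, atomY]

lemma twist_infDSum (h : IsAtom k a) (hW : W 2 1 = 0) :
    NCPaper.twist (infDSum k a W) = infDSum k (NCPaper.twist a) (NCPaper.twist W) := by
  refine NCPaper.twist_infDSum h.supportedIn fun t ht hkt hat => ?_
  cases h <;> simp_all [atomA, atomB, atomY]

lemma isWord (h : IsAtom k a) : IsWord k a := by
  simpa [infDSum_zero_right h.supportedIn] using IsWord.cons h .nil

end IsAtom

namespace IsWord

variable {n m : ℕ} {W X Y : Matrix ℕ ℕ (ZMod 2)}

lemma apply_two_one (h : IsWord n W) : W 2 1 = 0 := by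
  cases h with
  | nil => rfl
  | cons ha _ => exact ha.infDSum_apply_two_one

lemma infDSum (hX : IsWord n X) (hY : IsWord m Y) : IsWord (n + m) (infDSum n X Y) := by
  induction hX with
  | nil => simpa using hY
  | @cons k a n W ha _ ih =>
    rw [infDSum_assoc, Nat.add_assoc]
    exact cons ha ih

lemma twist (h : IsWord n W) : IsWord n (twist W) := by
  induction h with
  | nil => simpa using nil
  | cons ha hW ih =>
    rw [ha.twist_infDSum hW.apply_two_one]
    exact cons ha.twist ih

lemma twist_infDSum (hX : IsWord n X) (hY : IsWord m Y) :
    NCPaper.twist (NCPaper.infDSum n X Y) =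
      NCPaper.infDSum n (NCPaper.twist X) (NCPaper.twist Y) := by
  induction hX with
  | nil => simp
  | @cons k a n W ha hW ih =>
    rw [infDSum_assoc, ha.twist_infDSum (hW.infDSum hY).apply_two_one, ih,
      ha.twist_infDSum hW.apply_two_one, infDSum_assoc]

lemma eq_zero_of_twist_eq (h : IsWord n W) (hfix : NCPaper.twist W = W) : W = 0 := by
  induction h with
  | nil => rfl
  | cons ha hW ih =>
    rw [ha.twist_infDSum hW.apply_two_one,
      infDSum_inj ha.twist.supportedIn ha.supportedIn] at hfix
    rw [ha.eq_zero_of_twist_eq hfix.1, ih hfix.2, infDSum_zero_zero]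

lemma exists_eq (h : IsWord n W) : ∃ a b, n = 2 * a + 5 * b := by
  induction h with
  | nil => exact ⟨0, 0, rfl⟩
  | cons ha _ ih =>
    obtain ⟨a, b, rfl⟩ := ih
    rcases ha.size_eq with rfl | rfl
    · exact ⟨a + 1, b, by ring⟩
    · exact ⟨a, b + 1, by ring⟩

end IsWord

lemma isWord_zero : ∀ a b : ℕ, IsWord (2 * a + 5 * b) 0
  | 0, 0 => .nil
  | a + 1, b => by
    rw [show 2 * (a + 1) + 5 * b = 2 + (2 * a + 5 * b) by ring, ← infDSum_zero_zero (k := 2)]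
    exact .cons .zero_two (isWord_zero a b)
  | 0, b + 1 => by
    rw [show 2 * 0 + 5 * (b + 1) = 5 + (2 * 0 + 5 * b) by ring, ← infDSum_zero_zero (k := 5)]
    exact .cons .zero_five (isWord_zero 0 b)

def wordSet (n : ℕ) : Set (Matrix (Fin n) (Fin n) (ZMod 2)) :=
  {M | 0 < n ∧ IsWord n (extendZero M)}

def twistMap (n : ℕ) (M : Matrix (Fin n) (Fin n) (ZMod 2)) : Matrix (Fin n) (Fin n) (ZMod 2) :=
  corner n (twist (extendZero M))

section WordSet

variable {n m : ℕ} {M X : Matrix (Fin n) (Fin n) (ZMod 2)} {Y : Matrix (Fin m) (Fin m) (ZMod 2)}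

lemma extendZero_twistMap (M : Matrix (Fin n) (Fin n) (ZMod 2)) :
    extendZero (twistMap n M) = twist (extendZero M) :=
  extendZero_corner (supportedIn_extendZero M).twist

@[simp]
lemma twistMap_zero : twistMap n 0 = 0 := by
  simp [twistMap]; rfl

lemma wordSet_zero : wordSet 0 = ∅ := by
  simp [wordSet]

lemma respectsDSums_wordSet : RespectsDSums (0 : ZMod 2) wordSet := by
  intro n m X Y hX hY
  refine ⟨Nat.add_pos_left hX.1 m, ?_⟩
  rw [extendZero_dSum]
  exact hX.2.infDSum hY.2

lemma exists_size_eq_of_mem_wordSet (hM : M ∈ wordSet n) :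
    ∃ a b : ℕ, n = 2 * a + 5 * b ∧ 0 < a + b := by
  obtain ⟨a, b, rfl⟩ := hM.2.exists_eq
  exact ⟨a, b, rfl, by have := hM.1; omega⟩

lemma zero_mem_wordSet (h : ∃ a b : ℕ, n = 2 * a + 5 * b ∧ 0 < a + b) :
    (0 : Matrix (Fin n) (Fin n) (ZMod 2)) ∈ wordSet n := by
  obtain ⟨a, b, rfl, hab⟩ := h
  exact ⟨by omega, by simpa using isWord_zero a b⟩

lemma supp_wordSet : supp wordSet = {k : ℕ | ∃ a b : ℕ, k = 2 * a + 5 * b ∧ 0 < a + b} := by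
  ext n
  refine ⟨fun ⟨_, _, hM⟩ => exists_size_eq_of_mem_wordSet hM, fun h => ⟨?_, 0, zero_mem_wordSet h⟩⟩
  obtain ⟨a, b, rfl, hab⟩ := h
  omega

lemma twistMap_mem (hM : M ∈ wordSet n) : twistMap n M ∈ wordSet n := by
  refine ⟨hM.1, ?_⟩
  rw [extendZero_twistMap]
  exact hM.2.twist

lemma twistMap_dSum (hX : X ∈ wordSet n) (hY : Y ∈ wordSet m) :
    twistMap (n + m) (dSum 0 X Y) = dSum 0 (twistMap n X) (twistMap m Y) := by
  apply extendZero_injective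
  rw [extendZero_twistMap, extendZero_dSum, extendZero_dSum, extendZero_twistMap,
    extendZero_twistMap]
  exact hX.2.twist_infDSum hY.2

lemma existsUnique_twistMap_fixed (hn : n ∈ supp wordSet) :
    ∃! X, X ∈ wordSet n ∧ twistMap n X = X := by
  obtain ⟨_, M, hM⟩ := hn
  refine ⟨0, ⟨zero_mem_wordSet (exists_size_eq_of_mem_wordSet hM), twistMap_zero⟩, ?_⟩
  rintro X ⟨hX, hfix⟩
  apply extendZero_injective
  rw [extendZero_zero]
  exact hX.2.eq_zero_of_twist_eq (by rw [← extendZero_twistMap, hfix])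

lemma IsAtom.corner_mem_wordSet {k : ℕ} {a : Matrix ℕ ℕ (ZMod 2)} (h : IsAtom k a) :
    corner k a ∈ wordSet k := by
  refine ⟨by rcases h.size_eq with rfl | rfl <;> norm_num, ?_⟩
  rw [extendZero_corner h.supportedIn]
  exact h.isWord

lemma extendZero_dSum_corner_atomA_atomB :
    extendZero (dSum 0 (dSum 0 (corner 2 atomA) (0 : Matrix (Fin 1) (Fin 1) (ZMod 2)))
      (corner 2 atomB)) = atomY := by
  rw [extendZero_dSum, extendZero_dSum, extendZero_corner IsAtom.A.supportedIn,
    extendZero_corner IsAtom.B.supportedIn, extendZero_zero]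
  exact infDSum_atomA_atomB

end WordSet

def HasDiagonalFixedPointExtension [Zero S] (Ω : ∀ n : ℕ, Set (Matrix (Fin n) (Fin n) S))
    (f : ∀ n : ℕ, Matrix (Fin n) (Fin n) S → Matrix (Fin n) (Fin n) S) : Prop :=
  ∃ (Ωt : ∀ n : ℕ, Set (Matrix (Fin n) (Fin n) S))
    (ft : ∀ n : ℕ, Matrix (Fin n) (Fin n) S → Matrix (Fin n) (Fin n) S)
    (Xs : Matrix (Fin 1) (Fin 1) S),
    Ωt 0 = ∅ ∧ (∀ n, Ω n ⊆ Ωt n) ∧ RespectsDSums (0 : S) Ωt ∧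
    supp Ωt = {n : ℕ | 0 < n} ∧
    (∀ n ∈ supp Ωt, ∀ X ∈ Ωt n, ft n X ∈ Ωt n) ∧
    (∀ ⦃n m : ℕ⦄ (X : Matrix (Fin n) (Fin n) S) (Y : Matrix (Fin m) (Fin m) S),
      X ∈ Ωt n → Y ∈ Ωt m → ft (n + m) (dSum 0 X Y) = dSum 0 (ft n X) (ft m Y)) ∧
    (∀ n, ∀ X ∈ Ω n, ft n X = f n X) ∧
    (∀ n : ℕ, 0 < n →
      castMat (Nat.mul_one n) (repSum 0 n Xs) ∈ Ωt n ∧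
      ft n (castMat (Nat.mul_one n) (repSum 0 n Xs)) = castMat (Nat.mul_one n) (repSum 0 n Xs) ∧
      ∀ Y ∈ Ωt n, ft n Y = Y → Y = castMat (Nat.mul_one n) (repSum 0 n Xs))

theorem not_hasDiagonalFixedPointExtension [Zero S] {Ω : ∀ n : ℕ, Set (Matrix (Fin n) (Fin n) S)}
    {f : ∀ n : ℕ, Matrix (Fin n) (Fin n) S → Matrix (Fin n) (Fin n) S}
    {A B : Matrix (Fin 2) (Fin 2) S} (h0 : 0 ∈ Ω 2) (hf0 : f 2 0 = 0) (hA : A ∈ Ω 2)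
    (hB : B ∈ Ω 2) (hY : dSum 0 (dSum 0 A (0 : Matrix (Fin 1) (Fin 1) S)) B ∈ Ω 5)
    (hfY : f 5 (dSum 0 (dSum 0 A (0 : Matrix (Fin 1) (Fin 1) S)) B) ≠
      dSum 0 (dSum 0 (f 2 A) (0 : Matrix (Fin 1) (Fin 1) S)) (f 2 B)) :
    ¬ HasDiagonalFixedPointExtension Ω f := by
  rintro ⟨Ωt, ft, Xs, -, hsub, hdsum, -, -, hft_dsum, hft_eq, hfix⟩
  have hXs : Xs 0 0 = 0 := by
    have h2 := (hfix 2 two_pos).2.2 0 (hsub 2 h0) (by rw [hft_eq 2 0 h0, hf0])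
    exact (congrFun (congrFun h2 0) 0).symm
  have hXs1 : castMat (Nat.mul_one 1) (repSum 0 1 Xs) = 0 := by
    ext i j
    rw [Subsingleton.elim i 0, Subsingleton.elim j 0]
    exact hXs
  obtain ⟨h1_mem, h1_fix, -⟩ := hfix 1 one_pos
  rw [hXs1] at h1_mem h1_fix
  have hft_Y : ft 5 (dSum 0 (dSum 0 A (0 : Matrix (Fin 1) (Fin 1) S)) B) =
      dSum 0 (dSum 0 (ft 2 A) (ft 1 0)) (ft 2 B) := by
    rw [← hft_dsum _ _ (hsub 2 hA) h1_mem]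
    exact hft_dsum _ _ (hdsum _ _ (hsub 2 hA) h1_mem) (hsub 2 hB)
  apply hfY
  rw [← hft_eq 5 _ hY, hft_Y, h1_fix, hft_eq 2 A hA, hft_eq 2 B hB]

lemma not_hasDiagonalFixedPointExtension_wordSet :
    ¬ HasDiagonalFixedPointExtension wordSet twistMap := by
  refine not_hasDiagonalFixedPointExtension (zero_mem_wordSet ⟨1, 0, rfl, one_pos⟩) twistMap_zero
    IsAtom.A.corner_mem_wordSet IsAtom.B.corner_mem_wordSet
    ⟨by norm_num, extendZero_dSum_corner_atomA_atomB ▸ IsAtom.Y.isWord⟩ fun h => ?_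
  have h' := congrArg extendZero h
  rw [extendZero_twistMap, extendZero_dSum_corner_atomA_atomB, twist_atomY, extendZero_dSum,
    extendZero_dSum, extendZero_twistMap, extendZero_twistMap,
    extendZero_corner IsAtom.A.supportedIn, extendZero_corner IsAtom.B.supportedIn, twist_atomA,
    twist_atomB, extendZero_zero] at h'
  simpa [infDSum, atomB] using congrFun (congrFun h' 1) 0

/-- **Counterexample.** There is a direct-sum-closed subset `Ω` of the nc space over `ℤ/2ℤ`
with support `{2a + 5b : a, b ≥ 0 not both zero}` (whose gcd is 1) and a size- and
direct-sum-respecting self-mapping `f` with a unique fixed point at every level of the support,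
which admits no size- and direct-sum-respecting extension `ft` to a direct-sum-closed
`Ωt ⊇ Ω` with full support whose unique fixed point at level `n` is `⊕_{α=1}^n Xs`
for a fixed `1 × 1` matrix `Xs`. -/
theorem no_extension_without_similarity :
    ∃ (Ω : ∀ n : ℕ, Set (Matrix (Fin n) (Fin n) (ZMod 2)))
      (f : ∀ n : ℕ, Matrix (Fin n) (Fin n) (ZMod 2) → Matrix (Fin n) (Fin n) (ZMod 2)),
      Ω 0 = ∅ ∧ RespectsDSums (0 : ZMod 2) Ω ∧
      supp Ω = {k : ℕ | ∃ a b : ℕ, k = 2 * a + 5 * b ∧ 0 < a + b} ∧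
      (∀ n ∈ supp Ω, ∀ X ∈ Ω n, f n X ∈ Ω n) ∧
      (∀ ⦃n m : ℕ⦄ (X : Matrix (Fin n) (Fin n) (ZMod 2)) (Y : Matrix (Fin m) (Fin m) (ZMod 2)),
        X ∈ Ω n → Y ∈ Ω m → f (n + m) (dSum 0 X Y) = dSum 0 (f n X) (f m Y)) ∧
      (∀ n ∈ supp Ω, ∃! X : Matrix (Fin n) (Fin n) (ZMod 2), X ∈ Ω n ∧ f n X = X) ∧
      ¬ ∃ (Ωt : ∀ n : ℕ, Set (Matrix (Fin n) (Fin n) (ZMod 2)))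
          (ft : ∀ n : ℕ, Matrix (Fin n) (Fin n) (ZMod 2) → Matrix (Fin n) (Fin n) (ZMod 2))
          (Xs : Matrix (Fin 1) (Fin 1) (ZMod 2)),
          Ωt 0 = ∅ ∧ (∀ n, Ω n ⊆ Ωt n) ∧ RespectsDSums (0 : ZMod 2) Ωt ∧
          supp Ωt = {n : ℕ | 0 < n} ∧
          (∀ n ∈ supp Ωt, ∀ X ∈ Ωt n, ft n X ∈ Ωt n) ∧
          (∀ ⦃n m : ℕ⦄ (X : Matrix (Fin n) (Fin n) (ZMod 2))
            (Y : Matrix (Fin m) (Fin m) (ZMod 2)),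
            X ∈ Ωt n → Y ∈ Ωt m → ft (n + m) (dSum 0 X Y) = dSum 0 (ft n X) (ft m Y)) ∧
          (∀ n, ∀ X ∈ Ω n, ft n X = f n X) ∧
          (∀ n : ℕ, 0 < n →
            castMat (Nat.mul_one n) (repSum 0 n Xs) ∈ Ωt n ∧
            ft n (castMat (Nat.mul_one n) (repSum 0 n Xs)) =
              castMat (Nat.mul_one n) (repSum 0 n Xs) ∧
            ∀ Y ∈ Ωt n, ft n Y = Y → Y = castMat (Nat.mul_one n) (repSum 0 n Xs)) :=
  ⟨wordSet, twistMap, wordSet_zero, respectsDSums_wordSet, supp_wordSet,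
    fun _ _ _ hX => twistMap_mem hX, fun _ _ _ _ hX hY => twistMap_dSum hX hY,
    fun _ hn => existsUnique_twistMap_fixed hn, not_hasDiagonalFixedPointExtension_wordSet⟩

end NCPaper
end

section
/- Let V be an operator space over 𝔽 (𝔽 = ℝ or ℂ). For X ∈ V^{n×n} and Y ∈ V^{m×m}, define ρ(X,Y) := ‖⊕_{α=1}^m X − ⊕_{β=1}^n Y‖_{nm}. Then: (a) ρ extends the norm-induced metrics: if n = m then ρ(X,Y) = ‖X − Y‖_n; (b) ρ is a pseudometric on V_nc: ρ(X,X) = 0, ρ(X,Y) = ρ(Y,X), and ρ(X,Z) ≤ ρ(X,Y) + ρ(Y,Z) for all X ∈ V^{n×n}, Y ∈ V^{m×m}, Z ∈ V^{p×p}; (c) ρ(X,Y) = 0 if and only if X ∼ Y, i.e., if and only if there exist p ≥ 1 dividing both n and m and Z ∈ V^{p×p} with X = ⊕_{α=1}^{n/p} Z and Y = ⊕_{β=1}^{m/p} Z. -/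
/-!
The matrix `⊕_{α=1}^k X` is the top-left corner of the infinite block-diagonal matrix
`X ⊕ X ⊕ ⋯`, which is invariant under the diagonal shift by `d` and vanishes off the diagonal
`d × d` blocks. By the direct-sum axiom, the norm of a corner of such a matrix is the same for
every size that is a positive multiple of `d`, so `ρ(X,Y)` may be computed at any common
multiple of `n` and `m`; symmetry and the triangle inequality follow at size `nmp`.
If `ρ(X,Y) = 0`, the infinite extensions of `X` and `Y` agree on their common `nm`-corner,
hence everywhere. The common extension is then shift-invariant by `n` and `m`, hence by
`gcd(n,m)` (Euclid's algorithm), and vanishing off the `n`-blocks it also vanishes off the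
`gcd(n,m)`-blocks: its `gcd(n,m)`-corner `Z` satisfies `X = ⊕ Z` and `Y = ⊕ Z`.
-/

namespace NCPaper

variable {S : Type*}

/-- `ρ` is a metric on the subset `s`. -/
def IsMetricOn {A : Type*} (ρ : A → A → ℝ) (s : Set A) : Prop :=
  (∀ x ∈ s, ∀ y ∈ s, (ρ x y = 0 ↔ x = y)) ∧
  (∀ x ∈ s, ∀ y ∈ s, ρ x y = ρ y x) ∧
  (∀ x ∈ s, ∀ y ∈ s, ∀ z ∈ s, ρ x z ≤ ρ x y + ρ y z)

/-- The subset `s` is complete with respect to `ρ`: every Cauchy sequence in `s`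
converges to a point of `s`. -/
def IsCompleteOn {A : Type*} (ρ : A → A → ℝ) (s : Set A) : Prop :=
  ∀ u : ℕ → A, (∀ j, u j ∈ s) →
    (∀ ε > (0 : ℝ), ∃ N : ℕ, ∀ j ≥ N, ∀ k ≥ N, ρ (u j) (u k) < ε) →
    ∃ L ∈ s, ∀ ε > (0 : ℝ), ∃ N : ℕ, ∀ j ≥ N, ρ (u j) L < ε

/-- The subset `s` is closed in the ambient set `t` with respect to `ρ`: any point of `t` that
is a `ρ`-limit of a sequence from `s` belongs to `s`. -/
def IsClosedIn {A : Type*} (ρ : A → A → ℝ) (s t : Set A) : Prop :=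
  ∀ u : ℕ → A, (∀ j, u j ∈ s) → ∀ L ∈ t,
    (∀ ε > (0 : ℝ), ∃ N : ℕ, ∀ j ≥ N, ρ (u j) L < ε) → L ∈ s

/-- The (2,2) operator norm of a rectangular matrix over `ℝ` or `ℂ`. -/
noncomputable def l2opNorm {𝔽 : Type*} [RCLike 𝔽] {n m : ℕ}
    (S : Matrix (Fin n) (Fin m) 𝔽) : ℝ :=
  ‖LinearMap.toContinuousLinearMap (Matrix.toEuclideanLin S)‖

/-- Left action of a scalar matrix on a matrix over the vector space `V`. -/
def sLAct {𝔽 V : Type*} [RCLike 𝔽] [AddCommGroup V] [Module 𝔽 V] {n m p : ℕ}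
    (T : Matrix (Fin n) (Fin m) 𝔽) (Y : Matrix (Fin m) (Fin p) V) :
    Matrix (Fin n) (Fin p) V := fun i j => ∑ k, T i k • Y k j

/-- Right action of a scalar matrix on a matrix over the vector space `V`. -/
def sRAct {𝔽 V : Type*} [RCLike 𝔽] [AddCommGroup V] [Module 𝔽 V] {n m p : ℕ}
    (X : Matrix (Fin n) (Fin m) V) (T : Matrix (Fin m) (Fin p) 𝔽) :
    Matrix (Fin n) (Fin p) V := fun i j => ∑ k, T k j • X i k

/-- Two-sided action `S X T` of scalar matrices on a matrix over `V`. -/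
def sAct {𝔽 V : Type*} [RCLike 𝔽] [AddCommGroup V] [Module 𝔽 V] {n : ℕ}
    (S : Matrix (Fin n) (Fin n) 𝔽) (X : Matrix (Fin n) (Fin n) V)
    (T : Matrix (Fin n) (Fin n) 𝔽) : Matrix (Fin n) (Fin n) V :=
  fun i j => ∑ k, ∑ l, (S i k * T l j) • X k l

/-- `V` together with the norms `N n` on the matrix levels is an operator space over
`𝔽 = ℝ` or `𝔽 = ℂ`: each `N n` is a Banach-space norm, direct sums have the max norm,
and `‖S X T‖_n ≤ ‖S‖ ‖X‖_n ‖T‖` for scalar matrices `S, T` with the (2,2) operator norm. -/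
structure IsOperatorSpace (𝔽 : Type*) [RCLike 𝔽] (V : Type*) [AddCommGroup V] [Module 𝔽 V]
    (N : ∀ n : ℕ, Matrix (Fin n) (Fin n) V → ℝ) : Prop where
  eq_zero_iff : ∀ (n : ℕ) (X : Matrix (Fin n) (Fin n) V), N n X = 0 ↔ X = 0
  add_le : ∀ (n : ℕ) (X Y : Matrix (Fin n) (Fin n) V), N n (X + Y) ≤ N n X + N n Y
  smul_eq : ∀ (n : ℕ) (c : 𝔽) (X : Matrix (Fin n) (Fin n) V), N n (c • X) = ‖c‖ * N n X
  complete : ∀ n : ℕ, IsCompleteOn (fun X Y => N n (X - Y))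
      (Set.univ : Set (Matrix (Fin n) (Fin n) V))
  dsum_eq : ∀ (n m : ℕ) (X : Matrix (Fin n) (Fin n) V) (Y : Matrix (Fin m) (Fin m) V),
      N (n + m) (dSum 0 X Y) = max (N n X) (N m Y)
  act_le : ∀ (n : ℕ) (S T : Matrix (Fin n) (Fin n) 𝔽) (X : Matrix (Fin n) (Fin n) V),
      N n (sAct S X T) ≤ l2opNorm S * N n X * l2opNorm T

/-- Two square matrices over `S` are equivalent if both are direct sums of copies of one and
the same smaller matrix. -/
def SimRel (O : S) {n m : ℕ} (X : Matrix (Fin n) (Fin n) S)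
    (Y : Matrix (Fin m) (Fin m) S) : Prop :=
  ∃ p : ℕ, 0 < p ∧ ∃ (hn : p ∣ n) (hm : p ∣ m) (Z : Matrix (Fin p) (Fin p) S),
    X = castMat (Nat.div_mul_cancel hn) (repSum O (n / p) Z) ∧
    Y = castMat (Nat.div_mul_cancel hm) (repSum O (m / p) Z)

/-- The function `ρ(X,Y) := ‖⊕_{α=1}^m X − ⊕_{β=1}^n Y‖_{nm}` comparing square matrices of
different sizes over an operator space. -/
noncomputable def rho {V : Type*} [AddCommGroup V]
    (N : ∀ k : ℕ, Matrix (Fin k) (Fin k) V → ℝ) {n m : ℕ}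
    (X : Matrix (Fin n) (Fin n) V) (Y : Matrix (Fin m) (Fin m) V) : ℝ :=
  N (n * m) (castMat (Nat.mul_comm m n) (repSum 0 m X) - repSum 0 n Y)


/-- The infinite direct sum `X ⊕ X ⊕ ⋯`; `repSum O k X` is its top-left `k * d` corner. -/
def repSumInf (O : S) {d : ℕ} (X : Matrix (Fin d) (Fin d) S) : Matrix ℕ ℕ S := fun i j =>
  if h : 0 < d ∧ i / d = j / d then X ⟨i % d, Nat.mod_lt _ h.1⟩ ⟨j % d, Nat.mod_lt _ h.1⟩
  else O

def DiagPeriodic (F : Matrix ℕ ℕ S) (d : ℕ) : Prop :=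
  ∀ i j, F (i + d) (j + d) = F i j

/-- For `0 < d` this says that `F = repSumInf O X` for some `d × d` matrix `X`. -/
structure IsBlockPeriodic (O : S) (d : ℕ) (F : Matrix ℕ ℕ S) : Prop where
  diagPeriodic : DiagPeriodic F d
  apply_of_div_ne : ∀ i j, i / d ≠ j / d → F i j = O

theorem apply_castMat {β : Type*} (N : ∀ n : ℕ, Matrix (Fin n) (Fin n) S → β) {a b : ℕ}
    (h : a = b) (A : Matrix (Fin a) (Fin a) S) : N b (castMat h A) = N a A := by
  subst h
  rfl

section BlockPeriodic

variable {O : S} {F G : Matrix ℕ ℕ S} {d : ℕ}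

theorem submatrix_repSumInf (X : Matrix (Fin d) (Fin d) S) :
    (repSumInf O X).submatrix Fin.val Fin.val = X := by
  ext i j
  simp [repSumInf, i.pos, Nat.div_eq_of_lt, Nat.mod_eq_of_lt]

theorem repSum_eq_submatrix (k : ℕ) (X : Matrix (Fin d) (Fin d) S) :
    repSum O k X = (repSumInf O X).submatrix Fin.val Fin.val := by
  ext i j
  have hd : 0 < d := Nat.pos_of_ne_zero fun h => by simpa [h] using i.pos
  simp only [repSum, repSumInf, Matrix.submatrix_apply, hd, true_and]
  split_ifs <;> rfl

theorem castMat_repSum_s13 {k L : ℕ} (e : k * d = L) (X : Matrix (Fin d) (Fin d) S) :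
    castMat e (repSum O k X) = (repSumInf O X).submatrix Fin.val Fin.val := by
  subst e
  exact repSum_eq_submatrix k X

theorem DiagPeriodic.add_mul (h : DiagPeriodic F d) (k i j : ℕ) :
    F (i + k * d) (j + k * d) = F i j := by
  induction k with
  | zero => simp
  | succ k ih => rw [Nat.succ_mul, ← add_assoc, ← add_assoc, h, ih]

theorem DiagPeriodic.of_dvd {L : ℕ} (h : DiagPeriodic F d) (hdL : d ∣ L) :
    DiagPeriodic F L := by
  obtain ⟨k, rfl⟩ := hdL
  intro i j
  rw [mul_comm]
  exact h.add_mul k i j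

theorem DiagPeriodic.of_add {a b : ℕ} (ha : DiagPeriodic F a) (hab : DiagPeriodic F (a + b)) :
    DiagPeriodic F b := fun i j => by
  rw [← ha, add_assoc, add_assoc, add_comm b a, hab]

theorem DiagPeriodic.gcd {m n : ℕ} (hm : DiagPeriodic F m) (hn : DiagPeriodic F n) :
    DiagPeriodic F (Nat.gcd m n) := by
  induction m, n using Nat.gcd.induction with
  | H0 n => simpa using hn
  | H1 m n _ ih =>
    rw [Nat.gcd_rec]
    refine ih ((hm.of_dvd (dvd_mul_right m (n / m))).of_add ?_) hm
    rwa [Nat.div_add_mod]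

theorem exists_add_mul_div_lt {a b g n : ℕ} (hn : 0 < n) (hgn : g ∣ n) (hab : a / g < b / g) :
    ∃ k, (a + k * g) / n < (b + k * g) / n := by
  obtain ⟨q, rfl⟩ := hgn
  obtain ⟨q, rfl⟩ : ∃ q', q = q' + 1 :=
    ⟨q - 1, by have := Nat.pos_of_mul_pos_left hn; omega⟩
  have hg : 0 < g := Nat.pos_of_mul_pos_right hn
  have ha : a < b / g * g := (Nat.div_lt_iff_lt_mul hg).1 hab
  have hb : b / g * g ≤ b := Nat.div_mul_le_self b g
  refine ⟨b / g * q, ?_⟩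
  calc (a + b / g * q * g) / (g * (q + 1)) < b / g :=
        (Nat.div_lt_iff_lt_mul hn).2 (by nlinarith)
    _ ≤ (b + b / g * q * g) / (g * (q + 1)) :=
        (Nat.le_div_iff_mul_le hn).2 (by nlinarith)

theorem isBlockPeriodic_repSumInf (X : Matrix (Fin d) (Fin d) S) :
    IsBlockPeriodic O d (repSumInf O X) where
  diagPeriodic i j := by
    rcases Nat.eq_zero_or_pos d with rfl | hd
    · rfl
    · simp [repSumInf, hd, Nat.add_div_right, Nat.add_mod_right]
  apply_of_div_ne i j h := by simp [repSumInf, h]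

theorem IsBlockPeriodic.of_dvd {L : ℕ} (h : IsBlockPeriodic O d F) (hdL : d ∣ L) :
    IsBlockPeriodic O L F where
  diagPeriodic := h.diagPeriodic.of_dvd hdL
  apply_of_div_ne i j hij := h.apply_of_div_ne i j fun hd => hij <| by
    obtain ⟨k, rfl⟩ := hdL
    rw [← Nat.div_div_eq_div_mul, ← Nat.div_div_eq_div_mul, hd]

theorem IsBlockPeriodic.gcd {m n : ℕ} (hm : IsBlockPeriodic O m F) (hn : IsBlockPeriodic O n F)
    (hm0 : 0 < m) : IsBlockPeriodic O (Nat.gcd m n) F where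
  diagPeriodic := hm.diagPeriodic.gcd hn.diagPeriodic
  apply_of_div_ne i j hij := by
    have hg := hm.diagPeriodic.gcd hn.diagPeriodic
    rcases hij.lt_or_gt with hij | hij
    · obtain ⟨k, hk⟩ := exists_add_mul_div_lt hm0 (Nat.gcd_dvd_left m n) hij
      rw [← hg.add_mul k i j]
      exact hm.apply_of_div_ne _ _ hk.ne
    · obtain ⟨k, hk⟩ := exists_add_mul_div_lt hm0 (Nat.gcd_dvd_left m n) hij
      rw [← hg.add_mul k i j]
      exact hm.apply_of_div_ne _ _ hk.ne'

theorem IsBlockPeriodic.sub {V : Type*} [AddGroup V] {F G : Matrix ℕ ℕ V}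
    (hF : IsBlockPeriodic 0 d F) (hG : IsBlockPeriodic 0 d G) : IsBlockPeriodic 0 d (F - G) where
  diagPeriodic i j := by simp only [Matrix.sub_apply, hF.diagPeriodic i j, hG.diagPeriodic i j]
  apply_of_div_ne i j h := by simp [hF.apply_of_div_ne i j h, hG.apply_of_div_ne i j h]

theorem IsBlockPeriodic.repSumInf_submatrix (h : IsBlockPeriodic O d F) (hd : 0 < d) :
    repSumInf O (F.submatrix Fin.val Fin.val : Matrix (Fin d) (Fin d) S) = F := by
  ext i j
  by_cases hij : i / d = j / d
  · have hshift := h.diagPeriodic.add_mul (i / d) (i % d) (j % d)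
    rw [Nat.mod_add_div', hij, Nat.mod_add_div'] at hshift
    simp [repSumInf, hd, hij, hshift]
  · simp [repSumInf, hij, h.apply_of_div_ne i j hij]

theorem IsBlockPeriodic.eq_of_submatrix_eq (hF : IsBlockPeriodic O d F)
    (hG : IsBlockPeriodic O d G) (hd : 0 < d)
    (h : (F.submatrix Fin.val Fin.val : Matrix (Fin d) (Fin d) S) = G.submatrix Fin.val Fin.val) :
    F = G := by
  rw [← hF.repSumInf_submatrix hd, ← hG.repSumInf_submatrix hd, h]

theorem castMat_repSum_succ (O : S) {k : ℕ} (A : Matrix (Fin d) (Fin d) S) :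
    castMat (by ring) (repSum O (k + 1) A) = dSum O A (repSum O k A) := by
  have hA := isBlockPeriodic_repSumInf (O := O) A
  rw [castMat_repSum_s13, repSum_eq_submatrix]
  ext ⟨i, hi⟩ ⟨j, hj⟩
  simp only [Matrix.submatrix_apply, dSum]
  split_ifs with hid hjd hjd
  · exact congr_fun₂ (submatrix_repSumInf A) ⟨i, hid⟩ ⟨j, hjd⟩
  · exact hA.apply_of_div_ne i j <| by
      rw [Nat.div_eq_of_lt hid, ne_comm, Ne, Nat.div_eq_zero_iff]
      omega
  · exact hA.apply_of_div_ne i j <| by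
      rw [Nat.div_eq_of_lt hjd, Ne, Nat.div_eq_zero_iff]
      omega
  · have hshift := hA.diagPeriodic (i - d) (j - d)
    rwa [Nat.sub_add_cancel (not_lt.1 hid), Nat.sub_add_cancel (not_lt.1 hjd)] at hshift

variable {n m : ℕ}

theorem simRel_iff_repSumInf_eq (hn : 0 < n) (hm : 0 < m) (X : Matrix (Fin n) (Fin n) S)
    (Y : Matrix (Fin m) (Fin m) S) : SimRel O X Y ↔ repSumInf O X = repSumInf O Y := by
  constructor
  · rintro ⟨p, -, hpn, hpm, Z, rfl, rfl⟩
    have hZ := isBlockPeriodic_repSumInf (O := O) Z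
    rw [castMat_repSum_s13, castMat_repSum_s13, (hZ.of_dvd hpn).repSumInf_submatrix hn,
      (hZ.of_dvd hpm).repSumInf_submatrix hm]
  · intro h
    have hg : 0 < Nat.gcd n m := Nat.gcd_pos_of_pos_left m hn
    have hX := (isBlockPeriodic_repSumInf (O := O) X).gcd (h ▸ isBlockPeriodic_repSumInf Y) hn
    refine ⟨Nat.gcd n m, hg, Nat.gcd_dvd_left n m, Nat.gcd_dvd_right n m,
      (repSumInf O X).submatrix Fin.val Fin.val, ?_, ?_⟩
    · rw [castMat_repSum_s13, hX.repSumInf_submatrix hg, submatrix_repSumInf]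
    · rw [castMat_repSum_s13, hX.repSumInf_submatrix hg, h, submatrix_repSumInf]

end BlockPeriodic

section OperatorSpace

variable {𝔽 V : Type*} [RCLike 𝔽] [AddCommGroup V] [Module 𝔽 V]
  {N : ∀ n : ℕ, Matrix (Fin n) (Fin n) V → ℝ} {n m : ℕ}

theorem rho_eq_submatrix (X : Matrix (Fin n) (Fin n) V) (Y : Matrix (Fin m) (Fin m) V) :
    rho N X Y = N (n * m)
      ((repSumInf 0 X).submatrix Fin.val Fin.val - (repSumInf 0 Y).submatrix Fin.val Fin.val) := by
  rw [rho, castMat_repSum_s13, repSum_eq_submatrix]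

namespace IsOperatorSpace

variable (hop : IsOperatorSpace 𝔽 V N)
include hop

theorem map_neg_eq_map {k : ℕ} (A : Matrix (Fin k) (Fin k) V) : N k (-A) = N k A := by
  rw [← neg_one_smul 𝔽 A, hop.smul_eq]
  simp

theorem map_sub_rev {k : ℕ} (A B : Matrix (Fin k) (Fin k) V) : N k (A - B) = N k (B - A) := by
  rw [← hop.map_neg_eq_map, neg_sub]

theorem map_repSum {k d : ℕ} (hk : 0 < k) (A : Matrix (Fin d) (Fin d) V) :
    N (k * d) (repSum 0 k A) = N d A := by
  induction k, hk using Nat.le_induction with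
  | base =>
    show N (1 * d) (repSum 0 1 A) = N d A
    rw [← apply_castMat N (one_mul d), castMat_repSum_s13, submatrix_repSumInf]
  | succ k _ ih =>
    rw [← apply_castMat N (by ring : (k + 1) * d = d + k * d), castMat_repSum_succ, hop.dsum_eq,
      ih, max_self]

theorem map_submatrix_of_dvd {F : Matrix ℕ ℕ V} {d L : ℕ} (hF : IsBlockPeriodic 0 d F)
    (hdL : d ∣ L) (hL : 0 < L) :
    N L (F.submatrix Fin.val Fin.val) = N d (F.submatrix Fin.val Fin.val) := by
  obtain ⟨k, rfl⟩ := hdL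
  calc N (d * k) (F.submatrix Fin.val Fin.val)
      = N (d * k) (castMat (mul_comm k d) (repSum 0 k (F.submatrix Fin.val Fin.val))) := by
        rw [castMat_repSum_s13, hF.repSumInf_submatrix (Nat.pos_of_mul_pos_right hL)]
    _ = N d (F.submatrix Fin.val Fin.val) := by
        rw [apply_castMat N, hop.map_repSum (Nat.pos_of_mul_pos_left hL)]

theorem rho_eq_submatrix_of_dvd {L : ℕ} (hL : n * m ∣ L) (hL0 : 0 < L)
    (X : Matrix (Fin n) (Fin n) V) (Y : Matrix (Fin m) (Fin m) V) :
    rho N X Y = N L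
      ((repSumInf 0 X).submatrix Fin.val Fin.val - (repSumInf 0 Y).submatrix Fin.val Fin.val) := by
  have hF := ((isBlockPeriodic_repSumInf X).of_dvd (dvd_mul_right n m)).sub
    ((isBlockPeriodic_repSumInf Y).of_dvd (dvd_mul_left m n))
  simpa only [Matrix.submatrix_sub, Pi.sub_apply] using
    (rho_eq_submatrix X Y).trans (hop.map_submatrix_of_dvd hF hL hL0).symm

theorem rho_eq_map_sub (X Y : Matrix (Fin n) (Fin n) V) : rho N X Y = N n (X - Y) := by
  rcases Nat.eq_zero_or_pos n with rfl | hn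
  · exact congrArg (N 0) (Subsingleton.elim _ _)
  have h := hop.map_submatrix_of_dvd
    ((isBlockPeriodic_repSumInf X).sub (isBlockPeriodic_repSumInf Y)) (dvd_mul_left n n)
    (Nat.mul_pos hn hn)
  rw [rho_eq_submatrix]
  simpa only [Matrix.submatrix_sub, Pi.sub_apply, submatrix_repSumInf] using h

theorem rho_comm (X : Matrix (Fin n) (Fin n) V) (Y : Matrix (Fin m) (Fin m) V) (hn : 0 < n)
    (hm : 0 < m) : rho N X Y = rho N Y X := by
  rw [hop.rho_eq_submatrix_of_dvd dvd_rfl (Nat.mul_pos hn hm),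
    hop.rho_eq_submatrix_of_dvd (dvd_of_eq (mul_comm m n)) (Nat.mul_pos hn hm), hop.map_sub_rev]

theorem rho_triangle {p : ℕ} (X : Matrix (Fin n) (Fin n) V) (Y : Matrix (Fin m) (Fin m) V)
    (Z : Matrix (Fin p) (Fin p) V) (hn : 0 < n) (hm : 0 < m) (hp : 0 < p) :
    rho N X Z ≤ rho N X Y + rho N Y Z := by
  have hL : 0 < n * m * p := by positivity
  rw [hop.rho_eq_submatrix_of_dvd ⟨m, by ring⟩ hL X Z,
    hop.rho_eq_submatrix_of_dvd (dvd_mul_right _ p) hL X Y,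
    hop.rho_eq_submatrix_of_dvd ⟨n, by ring⟩ hL Y Z,
    ← sub_add_sub_cancel _
      ((repSumInf 0 Y).submatrix (Fin.val : Fin (n * m * p) → ℕ) Fin.val)]
  exact hop.add_le _ _ _

theorem rho_eq_zero_iff (X : Matrix (Fin n) (Fin n) V) (Y : Matrix (Fin m) (Fin m) V)
    (hn : 0 < n) (hm : 0 < m) : rho N X Y = 0 ↔ SimRel 0 X Y := by
  rw [simRel_iff_repSumInf_eq hn hm, rho_eq_submatrix, hop.eq_zero_iff, sub_eq_zero]
  exact ⟨((isBlockPeriodic_repSumInf X).of_dvd (dvd_mul_right n m)).eq_of_submatrix_eq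
    ((isBlockPeriodic_repSumInf Y).of_dvd (dvd_mul_left m n)) (Nat.mul_pos hn hm),
    congrArg (Matrix.submatrix · Fin.val Fin.val)⟩

end IsOperatorSpace

end OperatorSpace

/-- On an operator space, `ρ` extends the norm-induced metrics, is a pseudometric on the nc
space, and vanishes exactly on pairs of matrices that are direct sums of copies of one and the
same matrix. -/
theorem rho_pseudometric {𝔽 V : Type*} [RCLike 𝔽] [AddCommGroup V] [Module 𝔽 V]
    (N : ∀ n : ℕ, Matrix (Fin n) (Fin n) V → ℝ) (hop : IsOperatorSpace 𝔽 V N) :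
    (∀ (n : ℕ) (X Y : Matrix (Fin n) (Fin n) V), rho N X Y = N n (X - Y)) ∧
    (∀ (n : ℕ) (X : Matrix (Fin n) (Fin n) V), 0 < n → rho N X X = 0) ∧
    (∀ (n m : ℕ) (X : Matrix (Fin n) (Fin n) V) (Y : Matrix (Fin m) (Fin m) V),
      0 < n → 0 < m → rho N X Y = rho N Y X) ∧
    (∀ (n m p : ℕ) (X : Matrix (Fin n) (Fin n) V) (Y : Matrix (Fin m) (Fin m) V)
      (Z : Matrix (Fin p) (Fin p) V), 0 < n → 0 < m → 0 < p →
      rho N X Z ≤ rho N X Y + rho N Y Z) ∧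
    (∀ (n m : ℕ) (X : Matrix (Fin n) (Fin n) V) (Y : Matrix (Fin m) (Fin m) V),
      0 < n → 0 < m → (rho N X Y = 0 ↔ SimRel (0 : V) X Y)) := by
  refine ⟨fun _ => hop.rho_eq_map_sub, fun _ X _ => ?_, fun _ _ => hop.rho_comm,
    fun _ _ _ => hop.rho_triangle, fun _ _ => hop.rho_eq_zero_iff⟩
  rw [hop.rho_eq_map_sub, sub_self, hop.eq_zero_iff]

end NCPaper
end

section
/- Equip ℂ^{n×n} with the (2,2) operator norm ‖·‖_n for every n ≥ 1, and for X ∈ ℂ^{n×n}, Y ∈ ℂ^{m×m} set ρ(X,Y) := ‖⊕_{α=1}^m X − ⊕_{β=1}^n Y‖_{nm}. For j, n ≥ 1, let Ω^j_n := {X ∈ ℂ^{n×n} : ‖X‖_n ≤ n/(n+j)}. Then for every j ≥ 1, sup{ρ(X,Y) : n, m ≥ 1, X ∈ Ω^j_n, Y ∈ Ω^j_m} = 2; in particular, this supremum does not tend to 0 as j → ∞. -/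
namespace NCPaper

variable {S : Type*}

/-- The levelwise (2,2) operator norms on complex matrices. -/
noncomputable def cNorm : ∀ k : ℕ, Matrix (Fin k) (Fin k) ℂ → ℝ := fun _ A => l2opNorm A

/-- The set of distances `ρ(X,Y)` between points of the nested nc sets
`Ω^j_n = {X ∈ ℂ^{n×n} : ‖X‖_n ≤ n/(n+j)}`. -/
noncomputable def diamSet (j : ℕ) : Set ℝ :=
  {r : ℝ | ∃ (n m : ℕ) (X : Matrix (Fin n) (Fin n) ℂ) (Y : Matrix (Fin m) (Fin m) ℂ),
    0 < n ∧ 0 < m ∧ l2opNorm X ≤ (n : ℝ) / ((n : ℝ) + (j : ℝ)) ∧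
    l2opNorm Y ≤ (m : ℝ) / ((m : ℝ) + (j : ℝ)) ∧ r = rho cNorm X Y}

/-!
Up to reindexing, `⊕_{α=1}^k X` is the Kronecker product `1 ⊗ X`, so `X ↦ ⊕_{α=1}^k X` is a star
algebra homomorphism between C⋆-algebras and therefore contractive. Hence
`ρ(X,Y) ≤ ‖X‖ + ‖Y‖ ≤ 2` on `Ω^j`. Conversely, the scalar matrices `±n/(n+j)` lie in `Ω^j_n` and
are at distance `2n/(n+j) → 2` from each other.
-/

open Matrix Filter
open scoped Matrix.Norms.L2Operator Kronecker

lemma l2opNorm_eq_norm {𝕜 : Type*} [RCLike 𝕜] {n m : ℕ} (A : Matrix (Fin n) (Fin m) 𝕜) :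
    l2opNorm A = ‖A‖ :=
  rfl

lemma repSum_eq_reindex_one_kronecker {R : Type*} [MulZeroOneClass R] {d : ℕ} (k : ℕ)
    (X : Matrix (Fin d) (Fin d) R) :
    repSum (0 : R) k X =
      reindex finProdFinEquiv finProdFinEquiv ((1 : Matrix (Fin k) (Fin k) R) ⊗ₖ X) := by
  ext i j
  simp [repSum, one_apply, Fin.ext_iff, Fin.divNat, Fin.modNat]

def repSumStarAlgHom (R : Type*) [CommSemiring R] [StarRing R] (d k : ℕ) :
    Matrix (Fin d) (Fin d) R →⋆ₐ[R] Matrix (Fin (k * d)) (Fin (k * d)) R where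
  toFun := repSum 0 k
  map_one' := by simp [repSum_eq_reindex_one_kronecker]
  map_mul' X Y := by
    simp [repSum_eq_reindex_one_kronecker, submatrix_mul_equiv, ← mul_kronecker_mul]
  map_zero' := by simp [repSum_eq_reindex_one_kronecker]
  map_add' X Y := by
    simp only [repSum_eq_reindex_one_kronecker, kronecker_add]
    rfl
  commutes' c := by
    simp only [repSum_eq_reindex_one_kronecker, Algebra.algebraMap_eq_smul_one, kronecker_smul,
      one_kronecker_one, reindex_apply]
    exact congrArg (c • ·) (submatrix_one_equiv (α := R) finProdFinEquiv.symm)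
  map_star' X := by
    simp [repSum_eq_reindex_one_kronecker, star_eq_conjTranspose, conjTranspose_kronecker]

lemma norm_repSum_le {d : ℕ} (k : ℕ) (X : Matrix (Fin d) (Fin d) ℂ) :
    ‖repSum (0 : ℂ) k X‖ ≤ ‖X‖ :=
  NonUnitalStarAlgHom.norm_apply_le (repSumStarAlgHom ℂ d k) X

lemma norm_castMat {𝕜 : Type*} [RCLike 𝕜] {n m : ℕ} (h : n = m)
    (A : Matrix (Fin n) (Fin n) 𝕜) : ‖castMat h A‖ = ‖A‖ := by
  subst h; rfl

lemma castMat_algebraMap {R : Type*} [CommSemiring R] {n m : ℕ} (h : n = m) (c : R) :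
    castMat h (algebraMap R (Matrix (Fin n) (Fin n) R) c) = algebraMap R _ c := by
  subst h; rfl

lemma rho_cNorm_eq {n m : ℕ} (X : Matrix (Fin n) (Fin n) ℂ) (Y : Matrix (Fin m) (Fin m) ℂ) :
    rho cNorm X Y = ‖castMat (Nat.mul_comm m n) (repSum 0 m X) - repSum 0 n Y‖ :=
  rfl

lemma rho_cNorm_le {n m : ℕ} (X : Matrix (Fin n) (Fin n) ℂ) (Y : Matrix (Fin m) (Fin m) ℂ) :
    rho cNorm X Y ≤ ‖X‖ + ‖Y‖ := by
  rw [rho_cNorm_eq]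
  calc _ ≤ ‖castMat (Nat.mul_comm m n) (repSum 0 m X)‖ + ‖repSum (0 : ℂ) n Y‖ :=
        norm_sub_le _ _
    _ ≤ ‖X‖ + ‖Y‖ := by
      rw [norm_castMat]
      exact add_le_add (norm_repSum_le m X) (norm_repSum_le n Y)

lemma rho_cNorm_algebraMap {n m : ℕ} [NeZero n] [NeZero m] (a b : ℂ) :
    rho cNorm (algebraMap ℂ (Matrix (Fin n) (Fin n) ℂ) a)
      (algebraMap ℂ (Matrix (Fin m) (Fin m) ℂ) b) = ‖a - b‖ := by
  rw [rho_cNorm_eq]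
  change ‖castMat _ (repSumStarAlgHom ℂ n m _) - repSumStarAlgHom ℂ m n _‖ = _
  rw [AlgHomClass.commutes, AlgHomClass.commutes, castMat_algebraMap, ← map_sub, norm_algebraMap']

lemma natCast_div_add_natCast_le_one (n j : ℕ) : (n : ℝ) / (n + j) ≤ 1 :=
  div_le_one_of_le₀ (le_add_of_nonneg_right j.cast_nonneg) (by positivity)

lemma le_two_of_mem_diamSet {j : ℕ} {r : ℝ} (hr : r ∈ diamSet j) : r ≤ 2 := by
  obtain ⟨n, m, X, Y, -, -, hX, hY, rfl⟩ := hr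
  rw [l2opNorm_eq_norm] at hX hY
  calc rho cNorm X Y ≤ ‖X‖ + ‖Y‖ := rho_cNorm_le X Y
    _ ≤ 1 + 1 := add_le_add (hX.trans (natCast_div_add_natCast_le_one n j))
        (hY.trans (natCast_div_add_natCast_le_one m j))
    _ = 2 := one_add_one_eq_two

lemma add_mem_diamSet (j : ℕ) {n m : ℕ} (hn : 0 < n) (hm : 0 < m) :
    (n : ℝ) / (n + j) + (m : ℝ) / (m + j) ∈ diamSet j := by
  have : NeZero n := ⟨hn.ne'⟩
  have : NeZero m := ⟨hm.ne'⟩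
  set a : ℝ := (n : ℝ) / (n + j)
  set b : ℝ := (m : ℝ) / (m + j)
  have ha : 0 ≤ a := by positivity
  have hb : 0 ≤ b := by positivity
  refine ⟨n, m, algebraMap ℂ _ a, algebraMap ℂ _ (-b : ℝ), hn, hm, ?_, ?_, ?_⟩
  · rw [l2opNorm_eq_norm, norm_algebraMap', Complex.norm_real, Real.norm_of_nonneg ha]
  · rw [l2opNorm_eq_norm, norm_algebraMap', Complex.norm_real, norm_neg, Real.norm_of_nonneg hb]
  · rw [rho_cNorm_algebraMap, ← Complex.ofReal_sub, Complex.norm_real, sub_neg_eq_add,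
      Real.norm_of_nonneg (add_nonneg ha hb)]

lemma isLUB_diamSet (j : ℕ) : IsLUB (diamSet j) 2 := by
  refine ⟨fun r hr => le_two_of_mem_diamSet hr, fun b hb => ?_⟩
  have hlim : Tendsto (fun n : ℕ => (n : ℝ) / (n + j) + (n : ℝ) / (n + j)) atTop (nhds (1 + 1)) :=
    (tendsto_natCast_div_add_atTop (j : ℝ)).add (tendsto_natCast_div_add_atTop (j : ℝ))
  rw [one_add_one_eq_two] at hlim
  refine le_of_tendsto hlim ?_
  filter_upwards [eventually_gt_atTop 0] with n hn
  exact hb (add_mem_diamSet j hn hn)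

/-- **Nested sets example.** For every `j ≥ 1` the `ρ`-diameter of the nc set
`Ω^j = {X : ‖X‖_n ≤ n/(n+j)}` equals `2`; in particular it does not tend to `0`
as `j → ∞`. -/
theorem diam_of_nested_sets_eq_two :
    (∀ j : ℕ, 1 ≤ j → IsLUB (diamSet j) 2) ∧
    ¬ Filter.Tendsto (fun j : ℕ => sSup (diamSet j)) Filter.atTop (nhds 0) := by
  refine ⟨fun j _ => isLUB_diamSet j, ?_⟩
  have hsSup : (fun j : ℕ => sSup (diamSet j)) = fun _ => 2 :=
    funext fun j => (isLUB_diamSet j).csSup_eq ⟨_, add_mem_diamSet j one_pos one_pos⟩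
  rw [hsSup, tendsto_const_nhds_iff]
  exact two_ne_zero

end NCPaper
end
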